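/- arXiv:1809.01674 — 10 statements merged into one kernel-verified Lean document; each statement's English description precedes it below -/
import Mathlib

section
/- If W is an n×n real matrix with ρ(|W|) < 1 (spectral radius of the entrywise absolute value less than 1), then −I + W is totally Hurwitz, i.e., every principal submatrix of −I + W is a Hurwitz matrix (all eigenvalues have negative real part). -/
open Matrix
open scoped ENNReal

noncomputable def specRad {n : Type*} [Fintype n] [DecidableEq n] (A : Matrix n n ℝ) : ℝ :=
  sSup {r : ℝ | ∃ μ : ℂ, Module.End.HasEigenvalue
    (Matrix.toLin' (A.map (fun x => (x : ℂ)))) μ ∧ r = ‖μ‖}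

def IsHurwitz {n : Type*} [Fintype n] [DecidableEq n] (A : Matrix n n ℝ) : Prop :=
  ∀ μ : ℂ, Module.End.HasEigenvalue (Matrix.toLin' (A.map (fun x => (x : ℂ)))) μ → μ.re < 0

def TotallyHurwitz {n : Type*} [Fintype n] [DecidableEq n] (A : Matrix n n ℝ) : Prop :=
  ∀ S : Finset n,
    IsHurwitz (A.submatrix (fun i : {x // x ∈ S} => (i : n)) (fun i : {x // x ∈ S} => (i : n)))

def IsPMatrix {n : Type*} [Fintype n] [DecidableEq n] (A : Matrix n n ℝ) : Prop :=
  ∀ S : Finset n,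
    0 < (A.submatrix (fun i : {x // x ∈ S} => (i : n)) (fun i : {x // x ∈ S} => (i : n))).det

noncomputable def opNorm {m n : Type*} [Fintype m] [Fintype n] [DecidableEq n]
    (A : Matrix m n ℝ) : ℝ :=
  ‖LinearMap.toContinuousLinearMap (Matrix.toEuclideanLin A)‖

def TotallyLStable {n : Type*} [Fintype n] [DecidableEq n] (W : Matrix n n ℝ) : Prop :=
  ∃ P : Matrix n n ℝ, P.PosDef ∧ ∀ σ : n → ℝ, (∀ i, σ i = 0 ∨ σ i = 1) →
    (-((-1 + Wᵀ * Matrix.diagonal σ) * P + P * (-1 + Matrix.diagonal σ * W))).PosDef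

/-- componentwise positive part -/
def posv {n : Type*} (y : n → ℝ) : n → ℝ := fun i => max (y i) 0

/-- componentwise clamp to [0, m i], allowing `m i = ∞` -/
noncomputable def clamp {n : Type*} (m : n → ℝ≥0∞) (y : n → ℝ) : n → ℝ :=
  fun i => (min (ENNReal.ofReal (y i)) (m i)).toReal

/-!
If `μ` is an eigenvalue of the principal submatrix `(-1 + W)_S` with eigenvector `v`, then
`W_S v = (μ + 1) v`, and the triangle inequality gives `|μ + 1| |v| ≤ |W| |v|` componentwise once
`|v|` is extended by zero outside `S`. Iterating, `|μ + 1| ^ k ≤ ‖|W| ^ k‖`, so Gelfand's formula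
yields `|μ + 1| ≤ ρ(|W|) < 1`, and hence `Re μ < 0`.
-/

open Filter
open scoped NNReal

theorem le_spectralRadius_of_forall_pow_le_nnnorm_pow {A : Type*} [NormedRing A]
    [NormedAlgebra ℂ A] [CompleteSpace A] {a : A} {t : ℝ≥0} (h : ∀ k, t ^ k ≤ ‖a ^ k‖₊) :
    (t : ℝ≥0∞) ≤ spectralRadius ℂ a := by
  refine ge_of_tendsto (spectrum.pow_nnnorm_pow_one_div_tendsto_nhds_spectralRadius a) ?_
  filter_upwards [eventually_ge_atTop 1] with k hk
  have hk0 : (k : ℝ) ≠ 0 := by positivity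
  calc (t : ℝ≥0∞) = ((t ^ k : ℝ≥0) : ℝ≥0∞) ^ (1 / k : ℝ) := by
        rw [ENNReal.coe_pow, ← ENNReal.rpow_natCast, ← ENNReal.rpow_mul, mul_one_div_cancel hk0,
          ENNReal.rpow_one]
    _ ≤ (‖a ^ k‖₊ : ℝ≥0∞) ^ (1 / k : ℝ) := by gcongr; exact h k

namespace Matrix

theorem hasEigenvalue_toLin'_iff_mem_spectrum {n K : Type*} [Fintype n] [DecidableEq n]
    [Field K] {M : Matrix n n K} {μ : K} :
    Module.End.HasEigenvalue M.toLin' μ ↔ μ ∈ spectrum K M := by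
  rw [Module.End.hasEigenvalue_iff_mem_spectrum, spectrum_toLin']

theorem norm_smul_norm_le_abs_mulVec_norm {m : Type*} [Fintype m] {M : Matrix m m ℝ}
    {v : m → ℂ} {c : ℂ} (hv : M.map ((↑) : ℝ → ℂ) *ᵥ v = c • v) :
    ‖c‖ • (fun i => ‖v i‖) ≤ M.map abs *ᵥ fun i => ‖v i‖ := fun i =>
  calc ‖c‖ * ‖v i‖ = ‖(M.map ((↑) : ℝ → ℂ) *ᵥ v) i‖ := by
        rw [hv, Pi.smul_apply, smul_eq_mul, norm_mul]
    _ ≤ ∑ j, ‖(M i j : ℂ) * v j‖ := norm_sum_le _ _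
    _ = (M.map abs *ᵥ fun i => ‖v i‖) i := by simp [mulVec, dotProduct]

section Nonneg

variable {m n α : Type*} [Fintype n]

theorem mulVec_mono_of_nonneg [Semiring α] [PartialOrder α] [IsOrderedRing α]
    {A : Matrix m n α} (hA : ∀ i j, 0 ≤ A i j) {x y : n → α} (hxy : x ≤ y) :
    A *ᵥ x ≤ A *ᵥ y :=
  fun i => Finset.sum_le_sum fun j _ => mul_le_mul_of_nonneg_left (hxy j) (hA i j)

variable [Fintype m]

theorem smul_extend_le_mulVec_extend {A : Matrix n n ℝ} {t : ℝ} {e : m → n}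
    (he : Function.Injective e) (hA : ∀ i j, 0 ≤ A i j) {x : m → ℝ} (hx : 0 ≤ x)
    (h : t • x ≤ A.submatrix e e *ᵥ x) :
    t • Function.extend e x 0 ≤ A *ᵥ Function.extend e x 0 := by
  intro i
  have hsum : (A *ᵥ Function.extend e x 0) i = ∑ j, A i (e j) * x j :=
    (Fintype.sum_of_injective e he _ _
      (fun k hk => by rw [Function.extend_apply' _ _ _ hk, Pi.zero_apply, mul_zero])
      (fun j => by rw [he.extend_apply])).symm
  rw [hsum]
  by_cases hi : ∃ a, e a = i
  · obtain ⟨a, rfl⟩ := hi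
    simpa [he.extend_apply, mulVec, dotProduct] using h a
  · rw [Pi.smul_apply, Function.extend_apply' _ _ _ hi, Pi.zero_apply, smul_zero]
    exact Finset.sum_nonneg fun j _ => mul_nonneg (hA _ _) (hx j)

/- The `ℓ∞` operator norm is used because it is unchanged by complexification, so bounds on real
matrix powers transfer to Gelfand's formula over `ℂ`. -/
attribute [local instance] Matrix.linftyOpNormedAddCommGroup Matrix.linftyOpNormedRing
  Matrix.linftyOpNormedAlgebra

theorem linfty_opNNNorm_map_ofReal (A : Matrix m n ℝ) : ‖A.map ((↑) : ℝ → ℂ)‖₊ = ‖A‖₊ := by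
  simp [linfty_opNNNorm_def]

variable [DecidableEq n] {A : Matrix n n ℝ} {t : ℝ} {x : n → ℝ}

theorem pow_smul_le_pow_mulVec (hA : ∀ i j, 0 ≤ A i j) (ht : 0 ≤ t) (h : t • x ≤ A *ᵥ x)
    (k : ℕ) : t ^ k • x ≤ A ^ k *ᵥ x := by
  induction k with
  | zero => simp
  | succ k ih =>
    calc t ^ (k + 1) • x = t • t ^ k • x := by rw [pow_succ', mul_smul]
      _ ≤ t • (A ^ k *ᵥ x) := smul_le_smul_of_nonneg_left ih ht
      _ = A ^ k *ᵥ (t • x) := (mulVec_smul _ _ _).symm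
      _ ≤ A ^ k *ᵥ (A *ᵥ x) := mulVec_mono_of_nonneg (pow_apply_nonneg hA k) h
      _ = A ^ (k + 1) *ᵥ x := by rw [mulVec_mulVec, pow_succ]

theorem pow_le_linfty_opNorm_pow (hA : ∀ i j, 0 ≤ A i j) (ht : 0 ≤ t) (hx : 0 ≤ x)
    (hx0 : x ≠ 0) (h : t • x ≤ A *ᵥ x) (k : ℕ) : t ^ k ≤ ‖A ^ k‖ := by
  have hxk : ‖t ^ k • x‖ ≤ ‖A ^ k *ᵥ x‖ := by
    refine (pi_norm_le_iff_of_nonneg (norm_nonneg _)).2 fun i => ?_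
    have hxi : 0 ≤ (t ^ k • x) i := mul_nonneg (pow_nonneg ht k) (hx i)
    calc ‖(t ^ k • x) i‖ = (t ^ k • x) i := Real.norm_of_nonneg hxi
      _ ≤ (A ^ k *ᵥ x) i := pow_smul_le_pow_mulVec hA ht h k i
      _ ≤ ‖A ^ k *ᵥ x‖ := (Real.le_norm_self _).trans (norm_le_pi_norm _ i)
  rw [norm_smul, Real.norm_of_nonneg (pow_nonneg ht k)] at hxk
  exact le_of_mul_le_mul_right (hxk.trans (linfty_opNorm_mulVec _ _)) (norm_pos_iff.2 hx0)

theorem ofReal_le_spectralRadius_of_smul_le_mulVec (hA : ∀ i j, 0 ≤ A i j) (ht : 0 ≤ t)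
    (hx : 0 ≤ x) (hx0 : x ≠ 0) (h : t • x ≤ A *ᵥ x) :
    ENNReal.ofReal t ≤ spectralRadius ℂ (A.map ((↑) : ℝ → ℂ)) := by
  refine le_spectralRadius_of_forall_pow_le_nnnorm_pow fun k => ?_
  have hpow : A.map ((↑) : ℝ → ℂ) ^ k = (A ^ k).map (↑) := (A.map_pow Complex.ofRealHom k).symm
  rw [← NNReal.coe_le_coe, NNReal.coe_pow, Real.coe_toNNReal _ ht, hpow,
    linfty_opNNNorm_map_ofReal, coe_nnnorm]
  exact pow_le_linfty_opNorm_pow hA ht hx hx0 h k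

theorem spectralRadius_map_ofReal_le_specRad (A : Matrix n n ℝ) :
    spectralRadius ℂ (A.map ((↑) : ℝ → ℂ)) ≤ ENNReal.ofReal (specRad A) := by
  refine iSup₂_le fun μ hμ => ?_
  rw [← ENNReal.ofReal_coe_nnreal, coe_nnnorm, specRad]
  refine ENNReal.ofReal_le_ofReal (le_csSup ⟨‖A.map ((↑) : ℝ → ℂ)‖ * ‖(1 : Matrix n n ℂ)‖, ?_⟩
    ⟨μ, hasEigenvalue_toLin'_iff_mem_spectrum.2 hμ, rfl⟩)
  rintro _ ⟨ν, hν, rfl⟩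
  exact spectrum.norm_le_norm_mul_of_mem (hasEigenvalue_toLin'_iff_mem_spectrum.1 hν)

theorem ofReal_norm_le_spectralRadius_map_abs_of_submatrix_mulVec_eq_smul {W : Matrix n n ℝ}
    {e : m → n} (he : Function.Injective e) {v : m → ℂ} (hv0 : v ≠ 0) {c : ℂ}
    (hv : (W.submatrix e e).map ((↑) : ℝ → ℂ) *ᵥ v = c • v) :
    ENNReal.ofReal ‖c‖ ≤ spectralRadius ℂ ((W.map abs).map ((↑) : ℝ → ℂ)) := by
  have hsub := norm_smul_norm_le_abs_mulVec_norm hv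
  rw [← submatrix_map] at hsub
  have habs : ∀ i j, 0 ≤ W.map abs i j := fun i j => abs_nonneg (W i j)
  have hv_nonneg : 0 ≤ fun i => ‖v i‖ := fun i => norm_nonneg (v i)
  have hx0 : Function.extend e (fun i => ‖v i‖) 0 ≠ 0 := by
    obtain ⟨j, hj⟩ := Function.ne_iff.1 hv0
    refine Function.ne_iff.2 ⟨e j, ?_⟩
    simpa [he.extend_apply] using hj
  exact ofReal_le_spectralRadius_of_smul_le_mulVec habs (norm_nonneg c)
    (Function.extend_nonneg hv_nonneg le_rfl) hx0
    (smul_extend_le_mulVec_extend he habs hv_nonneg hsub)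

end Nonneg

end Matrix

theorem stmt0 {n : ℕ} (W : Matrix (Fin n) (Fin n) ℝ)
    (h : specRad (W.map (fun x => |x|)) < 1) :
    TotallyHurwitz (-1 + W) := by
  intro S μ hμ
  obtain ⟨v, hv⟩ := hμ.exists_hasEigenvector
  set e : S → Fin n := (↑)
  have he : Function.Injective e := Subtype.val_injective
  have hM : ((-1 + W).submatrix e e).map ((↑) : ℝ → ℂ) = -1 + (W.submatrix e e).map (↑) := by
    ext i j
    by_cases hij : i = j
    · simp [hij]
    · simp [hij, he.ne hij]
  have hWv : (W.submatrix e e).map ((↑) : ℝ → ℂ) *ᵥ v = (μ + 1) • v := by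
    have hμv := hv.apply_eq_smul
    rw [toLin'_apply, hM, add_mulVec, neg_mulVec, one_mulVec] at hμv
    rw [add_smul, one_smul, ← hμv]
    abel
  have hρ := (ofReal_norm_le_spectralRadius_map_abs_of_submatrix_mulVec_eq_smul he hv.2 hWv).trans
    (spectralRadius_map_ofReal_le_specRad _)
  have hlt : ‖μ + 1‖ < 1 := ENNReal.ofReal_lt_one.1 (hρ.trans_lt (ENNReal.ofReal_lt_one.2 h))
  linarith [Complex.re_le_norm (μ + 1), Complex.add_re μ 1, Complex.one_re]
end

section
/- If W is totally L-stable (there exists a single symmetric positive definite P such that (−I + WᵀΣ)P + P(−I + ΣW) ≺ 0 for all 0/1 diagonal Σ), then −I + W is totally Hurwitz, i.e., every principal submatrix of −I + W is Hurwitz. -/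
open Matrix
open scoped ENNReal

/-!
Let `Σ` be the indicator of `S` and `M = -I + ΣW`. The rows of `M` outside `S` are those of `-I`,
so `M` is block triangular and an eigenvector of its principal block on `S` (which is the principal
block of `-I + W`), extended by zero, is an eigenvector of `M` for the same eigenvalue `μ`.
For such a `v` one has `v⋆(MᵀP + PM)v = 2 Re μ · v⋆Pv`, so the Lyapunov inequality for `M`
with `P ≻ 0` forces `Re μ < 0`.
-/

open scoped ComplexOrder

namespace Matrix

variable {n : Type*} [Fintype n]

theorem re_lt_zero_of_lyapunov {𝕜 : Type*} [RCLike 𝕜] [DecidableEq n] {A P : Matrix n n 𝕜}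
    (hP : P.PosDef) (hQ : (-(Aᴴ * P + P * A)).PosDef) {μ : 𝕜}
    (hμ : Module.End.HasEigenvalue (toLin' A) μ) : RCLike.re μ < 0 := by
  obtain ⟨v, hv⟩ := hμ.exists_hasEigenvector
  have hAv : A *ᵥ v = μ • v := by
    simpa only [toLin'_apply] using hv.apply_eq_smul
  have hform : star v ⬝ᵥ (-(Aᴴ * P + P * A)) *ᵥ v =
      -(((2 * RCLike.re μ : ℝ) : 𝕜) * (star v ⬝ᵥ P *ᵥ v)) := by
    rw [neg_mulVec, add_mulVec, ← mulVec_mulVec, ← mulVec_mulVec, hAv, dotProduct_neg,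
      dotProduct_add, dotProduct_mulVec, vecMul_conjTranspose, star_star, hAv, mulVec_smul,
      star_smul, smul_dotProduct, dotProduct_smul, smul_eq_mul, smul_eq_mul, ← add_mul,
      add_comm, RCLike.star_def, RCLike.add_conj]
    push_cast
    ring
  have hp := hP.dotProduct_mulVec_pos hv.2
  have hq := hQ.dotProduct_mulVec_pos hv.2
  rw [hform, neg_pos] at hq
  by_contra! hre
  have hcoef : (0 : 𝕜) ≤ ((2 * RCLike.re μ : ℝ) : 𝕜) := RCLike.ofReal_nonneg.mpr (by linarith)
  exact (mul_nonneg hcoef hp.le).not_gt hq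

theorem re_star_dotProduct_map_ofReal_mulVec (R : Matrix n n ℝ) (x : n → ℂ) :
    (star x ⬝ᵥ R.map (fun r => (r : ℂ)) *ᵥ x).re =
      ((fun i => (x i).re) ⬝ᵥ R *ᵥ fun i => (x i).re) +
        ((fun i => (x i).im) ⬝ᵥ R *ᵥ fun i => (x i).im) := by
  simp only [dotProduct, mulVec, Finset.mul_sum, ← Finset.sum_add_distrib, Complex.re_sum,
    Pi.star_apply, map_apply, Complex.star_def, Complex.mul_re, Complex.mul_im, Complex.conj_re,
    Complex.conj_im, Complex.ofReal_re, Complex.ofReal_im]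
  refine Finset.sum_congr rfl fun i _ => Finset.sum_congr rfl fun j _ => ?_
  ring

theorem PosDef.map_ofReal {P : Matrix n n ℝ} (hP : P.PosDef) :
    (P.map (fun r => (r : ℂ))).PosDef := by
  have hherm : (P.map (fun r => (r : ℂ))).IsHermitian :=
    hP.isHermitian.map _ fun r => (Complex.conj_ofReal r).symm
  refine posDef_iff_dotProduct_mulVec.mpr ⟨hherm, fun x hx => ?_⟩
  refine Complex.lt_def.mpr ⟨?_, (hherm.im_star_dotProduct_mulVec_self x).symm⟩
  rw [re_star_dotProduct_map_ofReal_mulVec, Complex.zero_re]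
  have hnonneg (y : n → ℝ) : 0 ≤ y ⬝ᵥ P *ᵥ y := by
    simpa using hP.posSemidef.dotProduct_mulVec_nonneg y
  have hpos {y : n → ℝ} (hy : y ≠ 0) : 0 < y ⬝ᵥ P *ᵥ y := by
    simpa using hP.dotProduct_mulVec_pos hy
  by_cases hre : (fun i => (x i).re) = 0
  · have him : (fun i => (x i).im) ≠ 0 := fun him =>
      hx (funext fun i => Complex.ext (congrFun hre i) (congrFun him i))
    linarith [hnonneg fun i => (x i).re, hpos him]
  · linarith [hpos hre, hnonneg fun i => (x i).im]

theorem hasEigenvalue_toLin'_of_submatrix {R : Type*} [CommRing R] [DecidableEq n]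
    {B : Matrix n n R} {S : Finset n} (hB : ∀ i ∉ S, ∀ j ∈ S, B i j = 0) {μ : R}
    (hμ : Module.End.HasEigenvalue (toLin' (B.submatrix ((↑) : S → n) (↑))) μ) :
    Module.End.HasEigenvalue (toLin' B) μ := by
  obtain ⟨u, hu⟩ := hμ.exists_hasEigenvector
  have hBu : B.submatrix ((↑) : S → n) (↑) *ᵥ u = μ • u := by
    simpa only [toLin'_apply] using hu.apply_eq_smul
  let v : n → R := fun j => if hj : j ∈ S then u ⟨j, hj⟩ else 0
  have hBv_sum (i : n) : (B *ᵥ v) i = ∑ j : S, B i j * u j := by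
    rw [mulVec, dotProduct, ← Finset.sum_subset (Finset.subset_univ S), ← Finset.sum_coe_sort]
    · simp [v]
    · intro j _ hj
      simp [v, hj]
  refine Module.End.hasEigenvalue_of_hasEigenvector (x := v)
    ⟨Module.End.mem_eigenspace_iff.mpr ?_, fun hv => hu.2 (funext fun j => ?_)⟩
  · rw [toLin'_apply]
    funext i
    rw [hBv_sum]
    by_cases hi : i ∈ S
    · simp only [Pi.smul_apply, v, dif_pos hi]
      exact congrFun hBu ⟨i, hi⟩
    · simp [v, hi, hB i hi]
  · simpa [v] using congrFun hv j

end Matrix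

theorem isHurwitz_of_lyapunov {n : Type*} [Fintype n] [DecidableEq n] {A P : Matrix n n ℝ}
    (hP : P.PosDef) (hQ : (-(Aᵀ * P + P * A)).PosDef) : IsHurwitz A := by
  intro μ hμ
  refine Matrix.re_lt_zero_of_lyapunov hP.map_ofReal ?_ hμ
  have hmap : (-(Aᵀ * P + P * A)).map (fun r => (r : ℂ)) =
      -((A.map fun r => (r : ℂ))ᴴ * P.map (fun r => (r : ℂ)) +
        P.map (fun r => (r : ℂ)) * A.map fun r => (r : ℂ)) := by
    ext i j
    simp [mul_apply]
  simpa only [hmap] using hQ.map_ofReal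

theorem stmt2 {n : ℕ} (W : Matrix (Fin n) (Fin n) ℝ) (h : TotallyLStable W) :
    TotallyHurwitz (-1 + W) := by
  obtain ⟨P, hP, hLyap⟩ := h
  intro S μ hμ
  let σ : Fin n → ℝ := fun i => if i ∈ S then 1 else 0
  let M : Matrix (Fin n) (Fin n) ℝ := -1 + diagonal σ * W
  have hM : IsHurwitz M := by
    refine isHurwitz_of_lyapunov hP ?_
    simpa [M, transpose_add] using hLyap σ fun i => by by_cases hi : i ∈ S <;> simp [σ, hi]
  refine hM μ (Matrix.hasEigenvalue_toLin'_of_submatrix (S := S) ?_ ?_)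
  · intro i hi j hj
    simp [M, σ, hi, one_apply, (ne_of_mem_of_not_mem hj hi).symm]
  · convert hμ using 4
    ext i j
    simp [M, σ]
end

section
/- A real square matrix A is a P-matrix if and only if its inverse exists and A⁻¹ is a P-matrix. -/
open Matrix
open scoped ENNReal

/-!
Jacobi's complementary minor formula: for invertible `A` and any index set `S`,
`det A * det (A⁻¹)[S, S] = det A[Sᶜ, Sᶜ]`. Hence if all principal minors of `A` are positive,
so are those of `A⁻¹`; applied to `A⁻¹`, whose inverse is `A`, this gives the converse.
-/

section Jacobi

variable {R : Type*} [CommRing R]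

theorem Matrix.det_mul_det_toBlocks₁₁_of_mul_eq_one {p q : Type*} [Fintype p] [Fintype q]
    [DecidableEq p] [DecidableEq q] {M N : Matrix (p ⊕ q) (p ⊕ q) R} (h : M * N = 1) :
    M.det * N.toBlocks₁₁.det = M.toBlocks₂₂.det := by
  rw [← fromBlocks_toBlocks M, ← fromBlocks_toBlocks N, fromBlocks_multiply,
    ← fromBlocks_one] at h
  obtain ⟨h₁₁, -, h₂₁, -⟩ := fromBlocks_inj.mp h
  -- `M` times the first block column of `N`, completed by `[0; 1]`, is block upper triangular.
  have hprod : M * fromBlocks N.toBlocks₁₁ 0 N.toBlocks₂₁ 1 =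
      fromBlocks 1 M.toBlocks₁₂ 0 M.toBlocks₂₂ := by
    conv_lhs => rw [← fromBlocks_toBlocks M]
    simp only [fromBlocks_multiply, h₁₁, h₂₁, Matrix.mul_zero, Matrix.mul_one, zero_add]
  simpa [det_fromBlocks_zero₁₂, det_fromBlocks_zero₂₁] using congrArg det hprod

theorem Matrix.det_mul_det_submatrix_inv {n : Type*} [Fintype n] [DecidableEq n]
    (A : Matrix n n R) (hA : IsUnit A.det) (S : Finset n) :
    A.det * (A⁻¹.submatrix (fun i : {x // x ∈ S} => (i : n))
        (fun i : {x // x ∈ S} => (i : n))).det =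
      (A.submatrix (fun i : {x // x ∈ Sᶜ} => (i : n)) (fun i : {x // x ∈ Sᶜ} => (i : n))).det := by
  let e : {x // x ∈ S} ⊕ {x // x ∈ Sᶜ} ≃ n :=
    (Equiv.sumCongr (Equiv.refl _) (Equiv.subtypeEquivRight fun _ => Finset.mem_compl)).trans
      (Equiv.sumCompl (· ∈ S))
  have hdet : (A.submatrix e e).det = A.det := det_submatrix_equiv_self e A
  have hmul : A.submatrix e e * A⁻¹.submatrix e e = 1 := by
    rw [← inv_submatrix_equiv A e e]
    exact mul_nonsing_inv _ (hdet ▸ hA)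
  rw [← hdet]
  exact det_mul_det_toBlocks₁₁_of_mul_eq_one hmul

end Jacobi

section PMatrix

variable {n : Type*} [Fintype n] [DecidableEq n] {A : Matrix n n ℝ}

theorem IsPMatrix.det_pos (hA : IsPMatrix A) : 0 < A.det :=
  det_submatrix_equiv_self (Equiv.subtypeUnivEquiv Finset.mem_univ) A ▸
    hA Finset.univ

theorem IsPMatrix.inv (hA : IsPMatrix A) : IsPMatrix A⁻¹ := by
  intro S
  have hdet := hA.det_pos
  have hjacobi := det_mul_det_submatrix_inv A (isUnit_iff_ne_zero.mpr hdet.ne') S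
  exact pos_of_mul_pos_right (hjacobi ▸ hA Sᶜ) hdet.le

end PMatrix

theorem stmt4 {n : ℕ} (A : Matrix (Fin n) (Fin n) ℝ) :
    IsPMatrix A ↔ IsUnit A.det ∧ IsPMatrix A⁻¹ := by
  refine ⟨fun hA => ⟨isUnit_iff_ne_zero.mpr hA.det_pos.ne', hA.inv⟩, fun ⟨hunit, hinv⟩ => ?_⟩
  exact nonsing_inv_nonsing_inv A hunit ▸ hinv.inv
end

section
/- If A is a P-matrix partitioned in 2×2 block form with nonsingular bottom-right block A₂₂, then its principal pivot transform π(A) = [[A₁₁ − A₁₂A₂₂⁻¹A₂₁, A₁₂A₂₂⁻¹], [−A₂₂⁻¹A₂₁, A₂₂⁻¹]] is also a P-matrix. -/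
/-!
For a finite set `S` of indices let `X_S` (`rowMix S X`) be `X` with every row outside `S`
replaced by the corresponding row of the identity, so that `det X_S` is the principal minor
of `X` on `S`.
With `R` the index set of the second block, the principal pivot transform satisfies
`π(A) * A_R = A_Rᶜ`. Comparing rows gives `π(A)_S * A_R = A_(S ∆ R)` for every `S`, so each
principal minor of `π(A)` is a quotient of two principal minors of `A`, hence positive.
-/

open Matrix
open scoped ENNReal

namespace Matrix

variable {n R : Type*} [DecidableEq n]

def rowMix [Zero R] [One R] (S : Finset n) (X : Matrix n n R) : Matrix n n R :=
  of fun i j => if i ∈ S then X i j else (1 : Matrix n n R) i j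

lemma rowMix_apply [Zero R] [One R] (S : Finset n) (X : Matrix n n R) (i j : n) :
    rowMix S X i j = if i ∈ S then X i j else (1 : Matrix n n R) i j := rfl

lemma rowMix_mul_apply [Fintype n] [NonAssocSemiring R] (S : Finset n) (X Y : Matrix n n R)
    (i j : n) : (rowMix S X * Y) i j = if i ∈ S then (X * Y) i j else Y i j := by
  by_cases hi : i ∈ S
  · simp only [mul_apply, rowMix_apply, hi, if_true]
  · simp only [mul_apply, rowMix_apply, hi, if_false, one_apply, ite_mul, one_mul, zero_mul,
      Finset.sum_ite_eq, Finset.mem_univ, if_true]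

lemma det_rowMix [Fintype n] [CommRing R] (S : Finset n) (X : Matrix n n R) :
    (rowMix S X).det = (X.submatrix ((↑) : S → n) ((↑) : S → n)).det := by
  let e : S ⊕ {i // i ∉ S} ≃ n := Equiv.sumCompl (· ∈ S)
  have hblocks : (rowMix S X).submatrix e e =
      fromBlocks (X.submatrix ((↑) : S → n) ((↑) : S → n))
        (X.submatrix ((↑) : S → n) ((↑) : {i // i ∉ S} → n)) 0 1 := by
    ext (i | i) (j | j)
    · simp [rowMix_apply, e, i.2]
    · simp [rowMix_apply, e, i.2]
    · have hij : (i : n) ≠ j := fun h => i.2 (h ▸ j.2)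
      simp [rowMix_apply, e, i.2, hij]
    · simp [rowMix_apply, e, i.2, one_apply, Subtype.ext_iff]
  rw [← det_submatrix_equiv_self e, hblocks, det_fromBlocks_zero₂₁, det_one, mul_one]

/-- Row `i` of the product is row `i` of `rowMix R₀ A` when `i ∉ S`, and row `i` of
`rowMix R₀ᶜ A` when `i ∈ S`; either way it is a row of `A` exactly when `i ∈ symmDiff S R₀`. -/
lemma rowMix_mul_rowMix_of_mul_eq [Fintype n] [NonAssocSemiring R] {A B : Matrix n n R}
    {R₀ : Finset n} (hB : B * rowMix R₀ A = rowMix R₀ᶜ A) (S : Finset n) :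
    rowMix S B * rowMix R₀ A = rowMix (symmDiff S R₀) A := by
  ext i j
  rw [rowMix_mul_apply, hB]
  by_cases hS : i ∈ S <;> by_cases hR : i ∈ R₀ <;>
    simp [rowMix_apply, Finset.mem_symmDiff, hS, hR]

section BlockPivot

variable {m : Type*} [Fintype m] [DecidableEq m] [Fintype n] [CommRing R]

lemma principalPivot_mul_fromBlocks (A11 : Matrix m m R) (A12 : Matrix m n R)
    (A21 : Matrix n m R) (A22 : Matrix n n R) (hA22 : IsUnit A22.det) :
    fromBlocks (A11 - A12 * A22⁻¹ * A21) (A12 * A22⁻¹) (-(A22⁻¹ * A21)) A22⁻¹ *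
        fromBlocks 1 0 A21 A22 = fromBlocks A11 A12 0 1 := by
  have hinv : A22⁻¹ * A22 = 1 := nonsing_inv_mul A22 hA22
  rw [fromBlocks_multiply]
  congr 1 <;> simp [Matrix.mul_assoc, hinv]

lemma rowMix_isRight_fromBlocks (A11 : Matrix m m R) (A12 : Matrix m n R)
    (A21 : Matrix n m R) (A22 : Matrix n n R) :
    rowMix {i : m ⊕ n | i.isRight} (fromBlocks A11 A12 A21 A22) = fromBlocks 1 0 A21 A22 := by
  ext (i | i) (j | j) <;> simp [rowMix_apply, one_apply]

lemma rowMix_compl_isRight_fromBlocks (A11 : Matrix m m R) (A12 : Matrix m n R)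
    (A21 : Matrix n m R) (A22 : Matrix n n R) :
    rowMix ({i : m ⊕ n | i.isRight} : Finset (m ⊕ n))ᶜ (fromBlocks A11 A12 A21 A22) =
      fromBlocks A11 A12 0 1 := by
  ext (i | i) (j | j) <;> simp [rowMix_apply, one_apply]

end BlockPivot

end Matrix

lemma IsPMatrix.of_mul_rowMix_eq {n : Type*} [Fintype n] [DecidableEq n]
    {A B : Matrix n n ℝ} (hA : IsPMatrix A) {R : Finset n}
    (hB : B * rowMix R A = rowMix Rᶜ A) : IsPMatrix B := by
  intro S
  have hR : 0 < (rowMix R A).det := det_rowMix R A ▸ hA R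
  have hSR : 0 < (rowMix S B).det * (rowMix R A).det := by
    rw [← det_mul, rowMix_mul_rowMix_of_mul_eq hB, det_rowMix]
    exact hA _
  exact det_rowMix S B ▸ (mul_pos_iff_of_pos_right hR).mp hSR

theorem stmt6 {p q : ℕ} (A11 : Matrix (Fin p) (Fin p) ℝ) (A12 : Matrix (Fin p) (Fin q) ℝ)
    (A21 : Matrix (Fin q) (Fin p) ℝ) (A22 : Matrix (Fin q) (Fin q) ℝ)
    (hA22 : IsUnit A22.det)
    (hP : IsPMatrix (Matrix.fromBlocks A11 A12 A21 A22)) :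
    IsPMatrix (Matrix.fromBlocks (A11 - A12 * A22⁻¹ * A21) (A12 * A22⁻¹)
      (-(A22⁻¹ * A21)) A22⁻¹) := by
  refine hP.of_mul_rowMix_eq (R := {i | i.isRight}) ?_
  rw [rowMix_isRight_fromBlocks, rowMix_compl_isRight_fromBlocks]
  exact principalPivot_mul_fromBlocks A11 A12 A21 A22 hA22
end

section
/- For the unbounded linear-threshold equilibrium equation x = [Wx + d]₀^∞ (entrywise positive part), x ∈ ℝⁿ is an equilibrium if and only if the pair z = [Wx + d]₀^∞, w = [−(Wx + d)]₀^∞ solves the linear complementarity problem: z, w ≥ 0, zᵀw = 0, and w = (I − W)z − d. Consequently, if I − W is a P-matrix then for every d ∈ ℝⁿ the equation x = [Wx + d]₀^∞ has exactly one solution. -/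
open Matrix
open scoped ENNReal

/-!
With `y = W x + d`, the decomposition `y = y⁺ - y⁻` turns `x = y⁺` into the complementarity
problem for `z = y⁺`, `w = y⁻`, `w = (1 - W) z - d`; conversely, for a solution `z` of
`LCP(1 - W, -d)` one has `W z + d = z - w`, whose positive part is `z`. Invertibility of `W`
recovers `x` from `W y⁺ = W x`.

For a P-matrix `M`, no `x ≠ 0` has `x i * (M x) i ≤ 0` for all `i`: on the support `J` of `x`
this would give `(M_JJ + D) x_J = 0` with `D ≥ 0` diagonal, while `det (M_JJ + D) > 0` by
multilinearity of the determinant in the diagonal entries. Compactness of the unit sphere makes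
this quantitative: `α ‖x‖ ≤ ‖q‖` whenever `x i * (M x + q) i ≤ 0` for all `i`. Applied to
differences of solutions, this makes LCP solutions unique and Lipschitz in `q`. Existence is by
induction on the dimension: fixing the last coordinate `t ≥ 0` and solving the smaller problem,
the last residual `f t` is continuous in `t` and, by the same bound, eventually positive, so the
intermediate value theorem produces `t ≥ 0` with `f t ≥ 0` and `t * f t = 0`.
-/

structure IsLCPSolution {n : Type*} [Fintype n] (M : Matrix n n ℝ) (q z : n → ℝ) : Prop where
  nonneg : 0 ≤ z
  nonneg_mulVec_add : 0 ≤ M *ᵥ z + q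
  complementary : ∀ i, z i * (M *ᵥ z + q) i = 0

namespace Matrix

variable {n R : Type*} [Fintype n] [DecidableEq n] [CommRing R]

theorem det_updateCol_single_one (B : Matrix n n R) (a : n) :
    (B.updateCol a (Pi.single a 1)).det = (B.submatrix ((↑) : {x // x ≠ a} → n) (↑)).det := by
  let e : {x // x ≠ a} ⊕ Unit ≃ n :=
    (Equiv.optionEquivSumPUnit _).symm.trans (Equiv.optionSubtypeNe a)
  have hblocks : (B.updateCol a (Pi.single a 1)).submatrix e e =
      fromBlocks (B.submatrix (↑) (↑)) 0 (of fun _ (j : {x // x ≠ a}) => B a j) 1 := by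
    ext (i | i) (j | j)
    · simp [e, updateCol_ne j.2]
    · simp [e, i.2]
    · simp [e, updateCol_ne j.2]
    · simp [e]
  rw [← det_submatrix_equiv_self e, hblocks, det_fromBlocks_zero₁₂, det_one, mul_one]

theorem det_add_diagonal_single (B : Matrix n n R) (a : n) (c : R) :
    (B + diagonal (Pi.single a c)).det =
      B.det + c * (B.submatrix ((↑) : {x // x ≠ a} → n) (↑)).det := by
  have hcol : B + diagonal (Pi.single a c) =
      B.updateCol a (fun i => B i a + c • (Pi.single a 1 : n → R) i) := by
    ext i j
    by_cases hj : j = a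
    · subst hj; by_cases hi : i = j <;> simp [Pi.single_apply, hi]
    · by_cases hi : i = j
      · subst hi; simp [hj]
      · simp [updateCol_ne hj, hi]
  rw [hcol, ← Pi.add_def, det_updateCol_add, updateCol_eq_self, ← Pi.smul_def, det_updateCol_smul,
    det_updateCol_single_one]

end Matrix

namespace IsPMatrix

variable {n : Type*} [Fintype n] [DecidableEq n] {A : Matrix n n ℝ}

theorem det_submatrix_pos (hA : IsPMatrix A) {m : Type*} [Fintype m] [DecidableEq m]
    {f : m → n} (hf : Function.Injective f) : 0 < (A.submatrix f f).det := by
  let S : Finset n := Finset.univ.map ⟨f, hf⟩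
  let e : m ≃ {x // x ∈ S} :=
    (Equiv.ofInjective f hf).trans (Equiv.subtypeEquivRight (by simp [S]))
  have hsub : A.submatrix f f = (A.submatrix (↑) (↑) : Matrix S S ℝ).submatrix e e := rfl
  rw [hsub, det_submatrix_equiv_self]
  exact hA S

theorem det_pos_s9 (hA : IsPMatrix A) : 0 < A.det := by
  simpa using hA.det_submatrix_pos Function.injective_id

theorem submatrix (hA : IsPMatrix A) {m : Type*} [Fintype m] [DecidableEq m] {f : m → n}
    (hf : Function.Injective f) : IsPMatrix (A.submatrix f f) := fun S => by
  rw [submatrix_submatrix]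
  exact hA.det_submatrix_pos (hf.comp Subtype.val_injective)

theorem add_diagonal_single (hA : IsPMatrix A) (a : n) {c : ℝ} (hc : 0 ≤ c) :
    IsPMatrix (A + diagonal (Pi.single a c)) := by
  intro S
  simp only [submatrix_add, Pi.add_apply]
  by_cases ha : a ∈ S
  · have hdiag : (diagonal (Pi.single a c)).submatrix (↑) (↑) =
        (diagonal (Pi.single ⟨a, ha⟩ c) : Matrix S S ℝ) := by
      ext i j
      by_cases hij : i = j
      · subst hij; by_cases hi : (i : n) = a <;> simp [Pi.single_apply, hi, Subtype.ext_iff]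
      · have hij' : (i : n) ≠ j := fun h => hij (Subtype.ext h)
        rw [submatrix_apply, diagonal_apply_ne _ hij', diagonal_apply_ne _ hij]
    rw [hdiag, det_add_diagonal_single, submatrix_submatrix]
    exact add_pos_of_pos_of_nonneg (hA S)
      (mul_nonneg hc (hA.det_submatrix_pos (Subtype.val_injective.comp Subtype.val_injective)).le)
  · have hdiag : (diagonal (Pi.single a c)).submatrix (↑) (↑) = (0 : Matrix S S ℝ) := by
      ext i j
      have hi : (i : n) ≠ a := fun h => ha (h ▸ i.2)
      simp [diagonal_apply, hi]
    rw [hdiag, add_zero]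
    exact hA S

theorem add_diagonal (hA : IsPMatrix A) {t : n → ℝ} (ht : 0 ≤ t) :
    IsPMatrix (A + diagonal t) := by
  have key : ∀ s : Finset n, IsPMatrix (A + diagonal (∑ a ∈ s, Pi.single a (t a))) := by
    intro s
    induction s using Finset.induction_on with
    | empty => simpa using hA
    | insert a s ha ih =>
      convert ih.add_diagonal_single a (ht a) using 1
      rw [Finset.sum_insert ha, add_assoc, diagonal_add]
      congr 2
      exact add_comm _ _
  simpa [Finset.univ_sum_single] using key Finset.univ

theorem exists_mul_mulVec_pos (hA : IsPMatrix A) {x : n → ℝ} (hx : x ≠ 0) :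
    ∃ i, 0 < x i * (A *ᵥ x) i := by
  by_contra! hle
  let m := {i // x i ≠ 0}
  let t : m → ℝ := fun i => -(x i * (A *ᵥ x) i) / x i ^ 2
  have ht : 0 ≤ t := fun i => div_nonneg (neg_nonneg.2 (hle i)) (sq_nonneg _)
  have hsupp : ∀ i : m, ∑ j : m, A i j * x j = (A *ᵥ x) i := by
    intro i
    rw [mulVec, dotProduct, ← Fintype.sum_subtype_add_sum_subtype (fun j => x j ≠ 0),
      Fintype.sum_eq_zero (fun j : {j // ¬x j ≠ 0} => A i j * x j)
        (fun j => by simp [not_not.mp j.2]), add_zero]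
  have hker : (A.submatrix ((↑) : m → n) (↑) + diagonal t) *ᵥ (fun i : m => x i) = 0 := by
    ext i
    have hi : x i ≠ 0 := i.2
    rw [add_mulVec, Pi.add_apply, mulVec_diagonal, Pi.zero_apply]
    simp only [mulVec, dotProduct, submatrix_apply, hsupp, t]
    field_simp
    ring
  obtain ⟨i, hi⟩ := Function.ne_iff.mp hx
  refine ((hA.submatrix Subtype.val_injective).add_diagonal ht).det_pos_s9.ne' ?_
  exact exists_mulVec_eq_zero_iff.mp ⟨fun i : m => x i, Function.ne_iff.mpr ⟨⟨i, hi⟩, hi⟩, hker⟩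

theorem exists_pos_forall_norm_eq_one (hA : IsPMatrix A) :
    ∃ α > 0, ∀ x : n → ℝ, ‖x‖ = 1 → ∃ i, α ≤ x i * (A *ᵥ x) i := by
  cases isEmpty_or_nonempty n
  · exact ⟨1, one_pos, fun x hx => by simp [Subsingleton.elim x 0] at hx⟩
  let g : (n → ℝ) → ℝ := fun x => Finset.univ.sup' Finset.univ_nonempty fun i => x i * (A *ᵥ x) i
  have hg : Continuous g := Continuous.finset_sup'_apply _ fun i _ => by fun_prop
  have hpos : ∀ x ∈ Metric.sphere (0 : n → ℝ) 1, 0 < g x := by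
    intro x hx
    have hx0 : x ≠ 0 := ne_zero_of_mem_unit_sphere ⟨x, hx⟩
    obtain ⟨i, hi⟩ := hA.exists_mul_mulVec_pos hx0
    exact Finset.lt_sup'_iff _ |>.2 ⟨i, Finset.mem_univ i, hi⟩
  obtain ⟨α, hα, hαg⟩ := (isCompact_sphere _ _).exists_forall_le' hg.continuousOn hpos
  refine ⟨α, hα, fun x hx => ?_⟩
  obtain ⟨i, -, hi⟩ := Finset.le_sup'_iff _ |>.1 (hαg x (by simpa using hx))
  exact ⟨i, hi⟩

theorem exists_pos_mul_norm_le (hA : IsPMatrix A) :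
    ∃ α > 0, ∀ x q : n → ℝ, (∀ i, x i * (A *ᵥ x + q) i ≤ 0) → α * ‖x‖ ≤ ‖q‖ := by
  obtain ⟨α, hα, hsphere⟩ := hA.exists_pos_forall_norm_eq_one
  refine ⟨α, hα, fun x q hle => ?_⟩
  rcases eq_or_ne x 0 with rfl | hx
  · simp
  have hc : 0 < ‖x‖ := norm_pos_iff.2 hx
  obtain ⟨i, hi⟩ := hsphere (‖x‖⁻¹ • x) (norm_smul_inv_norm hx)
  have hscale : α * ‖x‖ ^ 2 ≤ x i * (A *ᵥ x) i := by
    rw [mulVec_smul, Pi.smul_apply, Pi.smul_apply, smul_eq_mul, smul_eq_mul] at hi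
    have := mul_le_mul_of_nonneg_right hi (sq_nonneg ‖x‖)
    field_simp at this
    linarith
  have hupper : x i * (A *ᵥ x) i ≤ ‖x‖ * ‖q‖ := by
    have hxq : -(x i * q i) ≤ ‖x‖ * ‖q‖ := by
      calc -(x i * q i) ≤ |x i * q i| := neg_le_abs _
        _ = ‖x i‖ * ‖q i‖ := by rw [abs_mul, Real.norm_eq_abs, Real.norm_eq_abs]
        _ ≤ ‖x‖ * ‖q‖ := mul_le_mul (norm_le_pi_norm x i) (norm_le_pi_norm q i)
            (norm_nonneg _) (norm_nonneg _)
    have := hle i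
    rw [Pi.add_apply, mul_add] at this
    linarith
  nlinarith

theorem exists_pos_mul_norm_sub_le (hA : IsPMatrix A) :
    ∃ α > 0, ∀ {q q' z z' : n → ℝ}, IsLCPSolution A q z → IsLCPSolution A q' z' →
      α * ‖z - z'‖ ≤ ‖q - q'‖ := by
  obtain ⟨α, hα, hbound⟩ := hA.exists_pos_mul_norm_le
  refine ⟨α, hα, fun {q q' z z'} h h' => hbound _ _ fun i => ?_⟩
  have hw : (A *ᵥ (z - z') + (q - q')) i = (A *ᵥ z + q) i - (A *ᵥ z' + q') i := by
    simp only [mulVec_sub, Pi.add_apply, Pi.sub_apply]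
    ring
  rw [hw, Pi.sub_apply]
  nlinarith [h.complementary i, h'.complementary i,
    mul_nonneg (h.nonneg i) (h'.nonneg_mulVec_add i), mul_nonneg (h'.nonneg i) (h.nonneg_mulVec_add i)]

theorem isLCPSolution_unique (hA : IsPMatrix A) {q z z' : n → ℝ} (h : IsLCPSolution A q z)
    (h' : IsLCPSolution A q z') : z = z' := by
  obtain ⟨α, hα, hlip⟩ := hA.exists_pos_mul_norm_sub_le
  have := hlip h h'
  rw [sub_self, norm_zero] at this
  exact sub_eq_zero.1 (norm_le_zero_iff.1 (nonpos_of_mul_nonpos_right this hα))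

end IsPMatrix

section Existence

variable {n : ℕ}

theorem mulVec_snoc_add_castSucc (M : Matrix (Fin (n + 1)) (Fin (n + 1)) ℝ) (q : Fin (n + 1) → ℝ)
    (z : Fin n → ℝ) (t : ℝ) (i : Fin n) :
    (M *ᵥ Fin.snoc z t + q) i.castSucc =
      (M.submatrix Fin.castSucc Fin.castSucc *ᵥ z +
        fun j : Fin n => q j.castSucc + t * M j.castSucc (Fin.last n)) i := by
  simp only [Pi.add_apply, mulVec, dotProduct, Fin.sum_univ_castSucc, Fin.snoc_castSucc,
    Fin.snoc_last, submatrix_apply]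
  ring

theorem IsLCPSolution.snoc {M : Matrix (Fin (n + 1)) (Fin (n + 1)) ℝ} {q : Fin (n + 1) → ℝ}
    {z : Fin n → ℝ} {t : ℝ}
    (hz : IsLCPSolution (M.submatrix Fin.castSucc Fin.castSucc)
      (fun j : Fin n => q j.castSucc + t * M j.castSucc (Fin.last n)) z)
    (ht : 0 ≤ t) (hw : 0 ≤ (M *ᵥ Fin.snoc z t + q) (Fin.last n))
    (htw : t * (M *ᵥ Fin.snoc z t + q) (Fin.last n) = 0) :
    IsLCPSolution M q (Fin.snoc z t) where
  nonneg i := Fin.lastCases (by simpa using ht) (fun j => by simpa using hz.nonneg j) i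
  nonneg_mulVec_add i := Fin.lastCases hw
    (fun j => by rw [mulVec_snoc_add_castSucc]; exact hz.nonneg_mulVec_add j) i
  complementary i := Fin.lastCases (by simpa using htw)
    (fun j => by rw [mulVec_snoc_add_castSucc, Fin.snoc_castSucc]; exact hz.complementary j) i

theorem IsPMatrix.exists_isLCPSolution_of_castSucc {M : Matrix (Fin (n + 1)) (Fin (n + 1)) ℝ}
    (hM : IsPMatrix M)
    (ih : ∀ q', ∃ z, IsLCPSolution (M.submatrix Fin.castSucc Fin.castSucc) q' z)
    (q : Fin (n + 1) → ℝ) : ∃ z, IsLCPSolution M q z := by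
  choose sol hsol using ih
  obtain ⟨α', hα', hlip⟩ := (hM.submatrix (Fin.castSucc_injective n)).exists_pos_mul_norm_sub_le
  have hsol_cont : Continuous sol := by
    refine (LipschitzWith.of_dist_le' (K := α'⁻¹) fun q₁ q₂ => ?_).continuous
    rw [dist_eq_norm, dist_eq_norm, le_inv_mul_iff₀ hα']
    exact hlip (hsol q₁) (hsol q₂)
  let z : ℝ → Fin n → ℝ := fun t => sol fun j => q j.castSucc + t * M j.castSucc (Fin.last n)
  let f : ℝ → ℝ := fun t => (M *ᵥ Fin.snoc (z t) t + q) (Fin.last n)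
  have hf : Continuous f := by
    have : Continuous z := hsol_cont.comp (by fun_prop)
    fun_prop
  have hsolve : ∀ t, 0 ≤ t → 0 ≤ f t → t * f t = 0 → ∃ z, IsLCPSolution M q z :=
    fun t ht hft htf => ⟨_, (hsol _).snoc ht hft htf⟩
  rcases le_or_gt 0 (f 0) with hf0 | hf0
  · exact hsolve 0 le_rfl hf0 (zero_mul _)
  obtain ⟨α, hα, hbound⟩ := hM.exists_pos_mul_norm_le
  set T := ‖q‖ / α + 1
  have hT : 0 < T := by positivity
  have hfT : 0 < f T := by
    by_contra! hfT
    have hle := hbound (Fin.snoc (z T) T) q fun i => by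
      refine Fin.lastCases ?_ (fun j => ?_) i
      · rw [Fin.snoc_last]; exact mul_nonpos_of_nonneg_of_nonpos hT.le hfT
      · rw [mulVec_snoc_add_castSucc, Fin.snoc_castSucc, (hsol _).complementary]
    have hTnorm : T ≤ ‖(Fin.snoc (z T) T : Fin (n + 1) → ℝ)‖ := by
      simpa [abs_of_pos hT] using norm_le_pi_norm (Fin.snoc (z T) T : Fin (n + 1) → ℝ) (Fin.last n)
    have : α * T ≤ ‖q‖ := le_trans (mul_le_mul_of_nonneg_left hTnorm hα.le) hle
    rw [mul_add, mul_div_cancel₀ _ hα.ne', mul_one] at this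
    linarith
  obtain ⟨t, ht, hft⟩ := intermediate_value_Icc hT.le hf.continuousOn ⟨hf0.le, hfT.le⟩
  exact hsolve t ht.1 hft.symm.le (by rw [hft, mul_zero])

theorem IsPMatrix.exists_isLCPSolution_fin :
    ∀ {n : ℕ} {M : Matrix (Fin n) (Fin n) ℝ}, IsPMatrix M → ∀ q, ∃ z, IsLCPSolution M q z
  | 0, _, _, _ => ⟨0, finZeroElim, finZeroElim, finZeroElim⟩
  | n + 1, _, hM, q => hM.exists_isLCPSolution_of_castSucc
      (fun _ => (hM.submatrix (Fin.castSucc_injective n)).exists_isLCPSolution_fin _) q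

end Existence

namespace IsPMatrix

variable {n : Type*} [Fintype n] [DecidableEq n] {A : Matrix n n ℝ}

theorem exists_isLCPSolution (hA : IsPMatrix A) (q : n → ℝ) : ∃ z, IsLCPSolution A q z := by
  let e := Fintype.equivFin n
  obtain ⟨z, hz⟩ := (hA.submatrix e.symm.injective).exists_isLCPSolution_fin (q ∘ e.symm)
  have hw : A *ᵥ (z ∘ e) + q = (A.submatrix e.symm e.symm *ᵥ z + q ∘ e.symm) ∘ e := by
    ext i
    simp [submatrix_mulVec_equiv]
  refine ⟨z ∘ e, fun i => hz.nonneg (e i), ?_, fun i => ?_⟩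
  · rw [hw]
    exact fun i => hz.nonneg_mulVec_add (e i)
  · rw [hw]
    exact hz.complementary (e i)

theorem existsUnique_isLCPSolution (hA : IsPMatrix A) (q : n → ℝ) :
    ∃! z, IsLCPSolution A q z :=
  let ⟨z, hz⟩ := hA.exists_isLCPSolution q
  ⟨z, hz, fun _ h => hA.isLCPSolution_unique h hz⟩

end IsPMatrix

section ThresholdNetwork

variable {n : Type*}

theorem posv_nonneg (y : n → ℝ) (i : n) : 0 ≤ posv y i := le_max_right _ _

theorem posv_sub_posv_neg (y : n → ℝ) : posv y - posv (-y) = y := posPart_sub_negPart y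

theorem posv_mul_posv_neg (y : n → ℝ) (i : n) : posv y i * posv (-y) i = 0 := by
  rcases le_total (y i) 0 with h | h <;> simp [posv, h]

theorem posv_sub_of_complementary {z w : n → ℝ} (hz : 0 ≤ z) (hw : 0 ≤ w)
    (hzw : ∀ i, z i * w i = 0) : posv (z - w) = z := by
  ext i
  rcases mul_eq_zero.1 (hzw i) with h | h
  · simpa [posv, h] using hw i
  · simpa [posv, h] using hz i

variable [Fintype n] [DecidableEq n]

theorem one_sub_mulVec_sub (W : Matrix n n ℝ) (x d : n → ℝ) :
    (1 - W) *ᵥ x - d = x - (W *ᵥ x + d) := by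
  rw [sub_mulVec, one_mulVec, sub_sub]

variable {W : Matrix n n ℝ} {d : n → ℝ}

theorem isLCPSolution_of_eq_posv {x : n → ℝ} (hx : x = posv (W *ᵥ x + d)) :
    IsLCPSolution (1 - W) (-d) x := by
  set y := W *ᵥ x + d
  have hw : (1 - W) *ᵥ x + -d = posv (-y) := by
    rw [← sub_eq_add_neg, one_sub_mulVec_sub, ← sub_sub_cancel (posv y) (posv (-y)),
      posv_sub_posv_neg, ← hx]
  refine ⟨hx ▸ posPart_nonneg y, hw ▸ posPart_nonneg (-y), fun i => ?_⟩
  rw [hw, hx]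
  exact posv_mul_posv_neg y i

theorem eq_posv_of_isLCPSolution {z : n → ℝ} (h : IsLCPSolution (1 - W) (-d) z) :
    z = posv (W *ᵥ z + d) := by
  rw [← sub_sub_cancel z (W *ᵥ z + d), ← one_sub_mulVec_sub, sub_eq_add_neg ((1 - W) *ᵥ z) d,
    posv_sub_of_complementary h.nonneg h.nonneg_mulVec_add h.complementary]

theorem eq_posv_iff_posv_neg_eq (hW : W.det ≠ 0) {x : n → ℝ} :
    x = posv (W *ᵥ x + d) ↔ posv (-(W *ᵥ x + d)) = (1 - W) *ᵥ posv (W *ᵥ x + d) - d := by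
  set y := W *ᵥ x + d with hy
  have hdecomp := posv_sub_posv_neg y
  constructor
  · intro hx
    rw [← hx, one_sub_mulVec_sub, ← hy]
    linear_combination -hx - hdecomp
  · intro h
    rw [h, one_sub_mulVec_sub, sub_sub_cancel, hy] at hdecomp
    have hinj : Function.Injective W.mulVec :=
      mulVec_injective_iff_isUnit.2 ((isUnit_iff_isUnit_det W).2 hW.isUnit)
    exact (hinj (add_right_cancel hdecomp)).symm

end ThresholdNetwork

theorem stmt9 {n : ℕ} (W : Matrix (Fin n) (Fin n) ℝ) (hW : W.det ≠ 0) (d : Fin n → ℝ) :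
    (∀ x : Fin n → ℝ,
      x = posv (W.mulVec x + d) ↔
        ((∀ i, 0 ≤ posv (W.mulVec x + d) i) ∧
         (∀ i, 0 ≤ posv (-(W.mulVec x + d)) i) ∧
         (∑ i, posv (W.mulVec x + d) i * posv (-(W.mulVec x + d)) i) = 0 ∧
         posv (-(W.mulVec x + d)) = (1 - W).mulVec (posv (W.mulVec x + d)) - d)) ∧
    (IsPMatrix (1 - W) → ∀ d' : Fin n → ℝ, ∃! x : Fin n → ℝ, x = posv (W.mulVec x + d')) := by
  refine ⟨fun x => ?_, fun hP d' => ?_⟩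
  · rw [eq_posv_iff_posv_neg_eq hW]
    refine ⟨fun h => ⟨posv_nonneg _, posv_nonneg _, ?_, h⟩, fun h => h.2.2.2⟩
    exact Finset.sum_eq_zero fun i _ => posv_mul_posv_neg _ i
  · obtain ⟨z, hz, hunique⟩ := hP.existsUnique_isLCPSolution (-d')
    exact ⟨z, eq_posv_of_isLCPSolution hz, fun x hx => hunique x (isLCPSolution_of_eq_posv hx)⟩
end

section
/- Let W satisfy det(I − ΣW) ≠ 0 for all 0/1 diagonal matrices Σ, and for σ ∈ {0,ℓ}ⁿ define the equilibrium candidate x*_σ = (I − ΣW)⁻¹Σd, where Σ is diagonal with Σ_{ii}=1 iff σ_i = ℓ. Then W x*_σ + d = (I − WΣ)⁻¹ d, and x*_σ lies in the switching region Ω_σ = {x : (Wx+d)_i ≤ 0 if σ_i = 0, (Wx+d)_i ≥ 0 if σ_i = ℓ} if and only if (2Σ − I)(I − WΣ)⁻¹ d ≥ 0. -/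
open Matrix
open scoped ENNReal

/-! By the push-through identity `W (1 - ΣW)⁻¹ Σ + 1 = (1 - WΣ)⁻¹`, the field `W x* + d` equals
`(1 - WΣ)⁻¹ d`. As `2σᵢ - 1 = ±1`, the sign condition of `Ω_σ` in coordinate `i` is nonnegativity
of `(2σᵢ - 1)((1 - WΣ)⁻¹ d)ᵢ`. -/

namespace Matrix

variable {n R : Type*} [Fintype n] [DecidableEq n] [CommRing R]

theorem mul_inv_one_sub_mul_mul_add_one (A B : Matrix n n R) (h : IsUnit (1 - A * B).det) :
    B * (1 - A * B)⁻¹ * A + 1 = (1 - B * A)⁻¹ := by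
  refine (inv_eq_right_inv ?_).symm
  calc (1 - B * A) * (B * (1 - A * B)⁻¹ * A + 1)
      = B * ((1 - A * B) * (1 - A * B)⁻¹) * A + (1 - B * A) := by noncomm_ring
    _ = 1 := by rw [mul_nonsing_inv _ h]; noncomm_ring

theorem mulVec_inv_one_sub_mul_mulVec_add (A B : Matrix n n R) (h : IsUnit (1 - A * B).det)
    (d : n → R) : B *ᵥ ((1 - A * B)⁻¹ *ᵥ (A *ᵥ d)) + d = (1 - B * A)⁻¹ *ᵥ d := by
  rw [← mul_inv_one_sub_mul_mul_add_one A B h, add_mulVec, one_mulVec, mulVec_mulVec,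
    mulVec_mulVec, Matrix.mul_assoc]

theorem two_smul_diagonal_sub_one_mul_mulVec_apply (σ : n → R) (M : Matrix n n R) (d : n → R)
    (i : n) : ((((2 : R) • diagonal σ - 1) * M) *ᵥ d) i = (2 * σ i - 1) * (M *ᵥ d) i := by
  rw [← mulVec_mulVec, sub_mulVec, smul_mulVec, one_mulVec, Pi.sub_apply, Pi.smul_apply,
    mulVec_diagonal, smul_eq_mul]
  ring

end Matrix

theorem sign_conditions_iff_nonneg_mul {R : Type*} [Ring R] [LinearOrder R]
    [IsStrictOrderedRing R] {s y : R} (hs : s = 0 ∨ s = 1) :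
    ((s = 0 → y ≤ 0) ∧ (s = 1 → 0 ≤ y)) ↔ 0 ≤ (2 * s - 1) * y := by
  rcases hs with rfl | rfl <;> norm_num

theorem stmt10 {n : ℕ} (W : Matrix (Fin n) (Fin n) ℝ) (d : Fin n → ℝ)
    (hinv : ∀ σ : Fin n → ℝ, (∀ i, σ i = 0 ∨ σ i = 1) →
      (1 - Matrix.diagonal σ * W).det ≠ 0 ∧ (1 - W * Matrix.diagonal σ).det ≠ 0)
    (σ : Fin n → ℝ) (hσ : ∀ i, σ i = 0 ∨ σ i = 1) :
    let xstar := (1 - Matrix.diagonal σ * W)⁻¹.mulVec ((Matrix.diagonal σ).mulVec d)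
    (W.mulVec xstar + d = (1 - W * Matrix.diagonal σ)⁻¹.mulVec d) ∧
    ((∀ i, (σ i = 0 → (W.mulVec xstar + d) i ≤ 0) ∧ (σ i = 1 → 0 ≤ (W.mulVec xstar + d) i)) ↔
      ∀ i, 0 ≤ (((2 : ℝ) • Matrix.diagonal σ - 1) *
        (1 - W * Matrix.diagonal σ)⁻¹).mulVec d i) := by
  intro xstar
  have hfield : W *ᵥ xstar + d = (1 - W * diagonal σ)⁻¹ *ᵥ d :=
    mulVec_inv_one_sub_mul_mulVec_add _ W (isUnit_iff_ne_zero.2 (hinv σ hσ).1) d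
  refine ⟨hfield, ?_⟩
  simp only [hfield, two_smul_diagonal_sub_one_mul_mulVec_apply]
  exact forall_congr' fun i => sign_conditions_iff_nonneg_mul (hσ i)
end

section
/- Consider τẋ = −x + [Wx + d]₀^m with m finite or infinite. If W is totally L-stable (there is P = Pᵀ ≻ 0 with (−I + WᵀΣ)P + P(−I + ΣW) ≺ 0 for all 0/1 diagonal Σ), then for every constant d ∈ ℝⁿ the system has a unique equilibrium x* and is globally exponentially stable relative to x*. -/
open Matrix
open scoped ENNReal

/-!
Every coordinate of the clamp is monotone and `1`-Lipschitz, so for the vector field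
`F x = -x + [Wx + d]₀^m` one has `F z - F y = -e + s ⊙ We` with `e = z - y` and slopes
`s ∈ [0,1]ⁿ`. The pairing `⟨e, P(-e + s ⊙ We)⟩` is affine in `s`, hence largest at a vertex of the
cube, where total L-stability makes it negative; compactness of the unit sphere then gives
`⟨z - y, P(F z - F y)⟩ ≤ -μ‖z - y‖²`. This strict monotonicity for the `P`-form yields uniqueness
of the equilibrium, makes a short Euler step `x ↦ x + εF x` contract the `P`-form (whence an
equilibrium exists), and makes `(x(t) - x*)ᵀP(x(t) - x*)` decay exponentially along trajectories.
-/

open Set Function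
open scoped NNReal

section Clamp

lemma exists_mem_Icc_sub_eq_mul_sub {g : ℝ → ℝ} (hmono : Monotone g) (hlip : LipschitzWith 1 g)
    (a b : ℝ) : ∃ s ∈ Icc (0 : ℝ) 1, g a - g b = s * (a - b) := by
  wlog hba : b < a generalizing a b
  · rcases (not_lt.1 hba).eq_or_lt with rfl | hab
    · exact ⟨0, ⟨le_rfl, zero_le_one⟩, by simp⟩
    · obtain ⟨s, hs, h⟩ := this b a hab
      exact ⟨s, hs, by linarith⟩
  have hpos : 0 < a - b := sub_pos.2 hba
  have hle : g a - g b ≤ a - b := by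
    have := hlip.dist_le_mul a b
    rw [NNReal.coe_one, one_mul, Real.dist_eq, Real.dist_eq, abs_of_pos hpos] at this
    exact (le_abs_self _).trans this
  refine ⟨(g a - g b) / (a - b),
    ⟨div_nonneg (sub_nonneg.2 (hmono hba.le)) hpos.le, (div_le_one hpos).2 hle⟩, ?_⟩
  field_simp

lemma monotone_toReal_min_ofReal (c : ℝ≥0∞) :
    Monotone fun r : ℝ => (min (ENNReal.ofReal r) c).toReal := fun _ _ hab =>
  ENNReal.toReal_mono ((min_le_left _ _).trans_lt ENNReal.ofReal_lt_top).ne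
    (min_le_min_right c (ENNReal.ofReal_le_ofReal hab))

lemma lipschitzWith_toReal_min_ofReal (c : ℝ≥0∞) :
    LipschitzWith 1 fun r : ℝ => (min (ENNReal.ofReal r) c).toReal := by
  rcases eq_or_ne c ∞ with rfl | hc
  · simpa [ENNReal.toReal_ofReal'] using LipschitzWith.id.max_const 0
  · simp_rw [ENNReal.toReal_min ENNReal.ofReal_ne_top hc, ENNReal.toReal_ofReal']
    exact (LipschitzWith.id.max_const 0).min_const _

lemma exists_clamp_sub_eq_mul {ι : Type*} (m : ι → ℝ≥0∞) (y y' : ι → ℝ) :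
    ∃ s : ι → ℝ, (∀ i, s i ∈ Icc (0 : ℝ) 1) ∧ clamp m y - clamp m y' = s * (y - y') := by
  choose s hs h using fun i => exists_mem_Icc_sub_eq_mul_sub (monotone_toReal_min_ofReal (m i))
    (lipschitzWith_toReal_min_ofReal (m i)) (y i) (y' i)
  exact ⟨s, hs, funext h⟩

variable {ι : Type*} [Fintype ι]

lemma lipschitzWith_clamp (m : ι → ℝ≥0∞) : LipschitzWith 1 (clamp m) := by
  refine LipschitzWith.of_dist_le_mul fun y y' => ?_
  obtain ⟨s, hs, h⟩ := exists_clamp_sub_eq_mul m y y'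
  have hs1 : ‖s‖ ≤ 1 := (pi_norm_le_iff_of_nonneg zero_le_one).2 fun i => by
    rw [Real.norm_eq_abs, abs_of_nonneg (hs i).1]
    exact (hs i).2
  rw [dist_eq_norm, dist_eq_norm, h, NNReal.coe_one, one_mul]
  exact (norm_mul_le _ _).trans (mul_le_of_le_one_left (norm_nonneg _) hs1)

noncomputable def thresholdField (m : ι → ℝ≥0∞) (W : Matrix ι ι ℝ) (d z : ι → ℝ) : ι → ℝ :=
  -z + clamp m (W *ᵥ z + d)

lemma exists_thresholdField_sub_eq (m : ι → ℝ≥0∞) (W : Matrix ι ι ℝ) (d z y : ι → ℝ) :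
    ∃ s : ι → ℝ, (∀ i, s i ∈ Icc (0 : ℝ) 1) ∧
      thresholdField m W d z - thresholdField m W d y = -(z - y) + s * (W *ᵥ (z - y)) := by
  obtain ⟨s, hs, h⟩ := exists_clamp_sub_eq_mul m (W *ᵥ z + d) (W *ᵥ y + d)
  refine ⟨s, hs, ?_⟩
  rw [add_sub_add_right_eq_sub, ← mulVec_sub] at h
  rw [← h, thresholdField, thresholdField]
  abel

lemma exists_lipschitzWith_thresholdField (m : ι → ℝ≥0∞) (W : Matrix ι ι ℝ) (d : ι → ℝ) :
    ∃ L, LipschitzWith L (thresholdField m W d) := by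
  have hW : LipschitzWith _ fun z => W *ᵥ z + d :=
    (LinearMap.toContinuousLinearMap (Matrix.mulVecLin W)).lipschitz.add (LipschitzWith.const d)
  exact ⟨_, LipschitzWith.id.neg.add ((lipschitzWith_clamp m).comp hW)⟩

end Clamp

section Lyapunov

variable {ι : Type*} [Fintype ι]

lemma dotProduct_mulVec_comm {P : Matrix ι ι ℝ} (hP : P.IsSymm) (a b : ι → ℝ) :
    a ⬝ᵥ (P *ᵥ b) = b ⬝ᵥ (P *ᵥ a) := by
  rw [dotProduct_mulVec, dotProduct_comm, ← mulVec_transpose, hP.eq]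

lemma dotProduct_mulVec_smul_self (P : Matrix ι ι ℝ) (r : ℝ) (e : ι → ℝ) :
    (r • e) ⬝ᵥ (P *ᵥ (r • e)) = r ^ 2 * (e ⬝ᵥ (P *ᵥ e)) := by
  rw [mulVec_smul, dotProduct_smul, smul_dotProduct, smul_eq_mul, smul_eq_mul]
  ring

lemma dotProduct_mulVec_add_smul {P : Matrix ι ι ℝ} (hP : P.IsSymm) (ε : ℝ) (e w : ι → ℝ) :
    (e + ε • w) ⬝ᵥ (P *ᵥ (e + ε • w)) =
      e ⬝ᵥ (P *ᵥ e) + 2 * ε * (e ⬝ᵥ (P *ᵥ w)) + ε ^ 2 * (w ⬝ᵥ (P *ᵥ w)) := by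
  simp only [mulVec_add, mulVec_smul, dotProduct_add, add_dotProduct, dotProduct_smul,
    smul_dotProduct, smul_eq_mul]
  rw [dotProduct_mulVec_comm hP w e]
  ring

/-- For symmetric `P`, half the minimum of `eᵀ Q_σ e` over the diagonal `0/1` matrices `σ`, where
`Q_σ = -((-1 + Wᵀσ) P + P (-1 + σW))` is the matrix of `TotallyLStable`; the minimum is attained
at `σᵢ = 1` exactly when `0 < (We)ᵢ (Pe)ᵢ`. -/
noncomputable def minDissipation (P W : Matrix ι ι ℝ) (e : ι → ℝ) : ℝ :=
  e ⬝ᵥ (P *ᵥ e) - ∑ i, max ((W *ᵥ e) i * (P *ᵥ e) i) 0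

lemma minDissipation_le (P W : Matrix ι ι ℝ) (e : ι → ℝ) :
    minDissipation P W e ≤ e ⬝ᵥ (P *ᵥ e) :=
  sub_le_self _ (Finset.sum_nonneg fun _ _ => le_max_right _ _)

lemma minDissipation_smul (P W : Matrix ι ι ℝ) (r : ℝ) (e : ι → ℝ) :
    minDissipation P W (r • e) = r ^ 2 * minDissipation P W e := by
  rw [minDissipation, minDissipation, dotProduct_mulVec_smul_self, mul_sub, Finset.mul_sum]
  congr 1
  refine Finset.sum_congr rfl fun i _ => ?_
  rw [mul_max_of_nonneg _ _ (sq_nonneg r), mul_zero, mulVec_smul, mulVec_smul]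
  simp only [Pi.smul_apply, smul_eq_mul]
  ring_nf

lemma continuous_minDissipation (P W : Matrix ι ι ℝ) : Continuous (minDissipation P W) := by
  unfold minDissipation
  fun_prop

lemma dotProduct_mulVec_neg_add_mul_le {P : Matrix ι ι ℝ} (hP : P.IsSymm) (W : Matrix ι ι ℝ)
    {s : ι → ℝ} (hs : ∀ i, s i ∈ Icc (0 : ℝ) 1) (e : ι → ℝ) :
    e ⬝ᵥ (P *ᵥ (-e + s * (W *ᵥ e))) ≤ -minDissipation P W e := by
  rw [mulVec_add, mulVec_neg, dotProduct_add, dotProduct_neg,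
    dotProduct_mulVec_comm hP e (s * _), minDissipation, neg_sub, sub_eq_neg_add]
  gcongr
  refine Finset.sum_le_sum fun i _ => ?_
  simp only [Pi.mul_apply]
  rcases le_total 0 ((W *ᵥ e) i * (P *ᵥ e) i) with h | h
  · rw [max_eq_left h]; nlinarith [(hs i).1, (hs i).2]
  · rw [max_eq_right h]; nlinarith [(hs i).1, (hs i).2]

lemma dotProduct_mulVec_thresholdField_sub_le {P W : Matrix ι ι ℝ} (hP : P.IsSymm) {μ : ℝ}
    (hμ : ∀ e, μ * ‖e‖ ^ 2 ≤ minDissipation P W e) (m : ι → ℝ≥0∞) (d z y : ι → ℝ) :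
    (z - y) ⬝ᵥ (P *ᵥ (thresholdField m W d z - thresholdField m W d y)) ≤ -μ * ‖z - y‖ ^ 2 := by
  obtain ⟨s, hs, h⟩ := exists_thresholdField_sub_eq m W d z y
  rw [h, neg_mul]
  exact (dotProduct_mulVec_neg_add_mul_le hP W hs _).trans (neg_le_neg (hμ _))

variable [DecidableEq ι]

lemma dotProduct_lyapunov_mulVec {P : Matrix ι ι ℝ} (hP : P.IsSymm) (W : Matrix ι ι ℝ)
    (σ e : ι → ℝ) :
    e ⬝ᵥ (-((-1 + Wᵀ * diagonal σ) * P + P * (-1 + diagonal σ * W)) *ᵥ e) =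
      2 * (e ⬝ᵥ (P *ᵥ e) - ∑ i, σ i * ((W *ᵥ e) i * (P *ᵥ e) i)) := by
  have hW : e ⬝ᵥ ((Wᵀ * diagonal σ * P) *ᵥ e) = ∑ i, σ i * ((W *ᵥ e) i * (P *ᵥ e) i) := by
    rw [← mulVec_mulVec, ← mulVec_mulVec, dotProduct_mulVec, vecMul_transpose]
    simp only [dotProduct, mulVec_diagonal]
    exact Finset.sum_congr rfl fun i _ => by ring
  have hP' : e ⬝ᵥ ((P * (diagonal σ * W)) *ᵥ e) = ∑ i, σ i * ((W *ᵥ e) i * (P *ᵥ e) i) := by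
    rw [← mulVec_mulVec, dotProduct_mulVec_comm hP, ← mulVec_mulVec]
    simp only [dotProduct, mulVec_diagonal]
    exact Finset.sum_congr rfl fun i _ => by ring
  simp only [neg_mulVec, add_mulVec, Matrix.add_mul, Matrix.mul_add, neg_mul, one_mul, mul_neg,
    mul_one, dotProduct_neg, dotProduct_add, hW, hP']
  ring

lemma minDissipation_pos {P W : Matrix ι ι ℝ} (hP : P.PosDef)
    (hQ : ∀ σ : ι → ℝ, (∀ i, σ i = 0 ∨ σ i = 1) →
      (-((-1 + Wᵀ * diagonal σ) * P + P * (-1 + diagonal σ * W))).PosDef)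
    {e : ι → ℝ} (he : e ≠ 0) : 0 < minDissipation P W e := by
  set σ : ι → ℝ := fun i => if 0 < (W *ᵥ e) i * (P *ᵥ e) i then 1 else 0
  have hσ : ∀ i, σ i * ((W *ᵥ e) i * (P *ᵥ e) i) = max ((W *ᵥ e) i * (P *ᵥ e) i) 0 := by
    intro i
    by_cases h : 0 < (W *ᵥ e) i * (P *ᵥ e) i
    · simp [σ, h, h.le]
    · simp [σ, h, not_lt.1 h]
  have hvert : ∀ i, σ i = 0 ∨ σ i = 1 := fun i => by
    by_cases h : 0 < (W *ᵥ e) i * (P *ᵥ e) i <;> simp [σ, h]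
  have hQe := (hQ σ hvert).dotProduct_mulVec_pos he
  rw [star_trivial, dotProduct_lyapunov_mulVec (isHermitian_iff_isSymm.1 hP.1) W σ e] at hQe
  simp only [hσ] at hQe
  unfold minDissipation
  linarith

end Lyapunov

section Homogeneous

variable {E : Type*} [NormedAddCommGroup E] [NormedSpace ℝ E] {f : E → ℝ}

lemma eq_sq_norm_mul_of_smul (hf : ∀ (r : ℝ) e, f (r • e) = r ^ 2 * f e) (e : E) :
    f e = ‖e‖ ^ 2 * f (‖e‖⁻¹ • e) := by
  rcases eq_or_ne e 0 with rfl | he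
  · simpa using hf 0 0
  · rw [← hf, smul_inv_smul₀ (norm_ne_zero_iff.2 he)]

variable [ProperSpace E]

lemma exists_pos_mul_sq_norm_le (hcont : Continuous f) (hf : ∀ (r : ℝ) e, f (r • e) = r ^ 2 * f e)
    (hpos : ∀ e ≠ 0, 0 < f e) : ∃ μ > 0, ∀ e, μ * ‖e‖ ^ 2 ≤ f e := by
  obtain ⟨μ, hμ, hμf⟩ := (isCompact_sphere (0 : E) 1).exists_forall_le' hcont.continuousOn
    fun u hu => hpos u (ne_zero_of_mem_unit_sphere ⟨u, hu⟩)
  refine ⟨μ, hμ, fun e => ?_⟩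
  rcases eq_or_ne e 0 with rfl | he
  · simpa using (hf 0 0).ge
  rw [eq_sq_norm_mul_of_smul hf e, mul_comm μ]
  exact mul_le_mul_of_nonneg_left (hμf _ (by simp [norm_smul, he])) (sq_nonneg _)

lemma exists_le_mul_sq_norm (hcont : Continuous f) (hf : ∀ (r : ℝ) e, f (r • e) = r ^ 2 * f e) :
    ∃ β > 0, ∀ e, f e ≤ β * ‖e‖ ^ 2 := by
  obtain ⟨β, hβ⟩ := (isCompact_sphere (0 : E) 1).bddAbove_image hcont.continuousOn
  refine ⟨max β 1, by positivity, fun e => ?_⟩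
  rcases eq_or_ne e 0 with rfl | he
  · simpa using (hf 0 0).le
  rw [eq_sq_norm_mul_of_smul hf e, mul_comm (max β 1)]
  refine mul_le_mul_of_nonneg_left ((hβ ⟨_, ?_, rfl⟩).trans (le_max_left _ _)) (sq_nonneg _)
  simp [norm_smul, he]

end Homogeneous

section Calculus

variable {ι : Type*} [Fintype ι] {u v : ℝ → ι → ℝ} {u' v' : ι → ℝ} {t : ℝ}

lemma HasDerivAt.dotProduct (hu : HasDerivAt u u' t) (hv : HasDerivAt v v' t) :
    HasDerivAt (fun s => u s ⬝ᵥ v s) (u' ⬝ᵥ v t + u t ⬝ᵥ v') t := by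
  have h := HasDerivAt.fun_sum (u := Finset.univ)
    fun i _ => (hasDerivAt_pi.1 hu i).fun_mul (hasDerivAt_pi.1 hv i)
  rw [Finset.sum_add_distrib] at h
  exact h

lemma HasDerivAt.matrix_mulVec (hu : HasDerivAt u u' t) (P : Matrix ι ι ℝ) :
    HasDerivAt (fun s => P *ᵥ u s) (P *ᵥ u') t :=
  (LinearMap.toContinuousLinearMap (Matrix.mulVecLin P)).hasFDerivAt.comp_hasDerivAt t hu

lemma le_mul_exp_of_hasDerivAt_le {v v' : ℝ → ℝ} {k : ℝ}
    (hv : ∀ s, 0 ≤ s → HasDerivAt v (v' s) s) (hle : ∀ s, 0 ≤ s → v' s ≤ -k * v s)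
    (ht : 0 ≤ t) : v t ≤ v 0 * Real.exp (-k * t) := by
  have hg : ∀ s, 0 ≤ s → HasDerivAt (fun r => v r * Real.exp (k * r))
      ((v' s + k * v s) * Real.exp (k * s)) s := fun s hs =>
    ((hv s hs).fun_mul ((hasDerivAt_id' s).const_mul k).exp).congr_deriv (by ring)
  have hanti : AntitoneOn (fun r => v r * Real.exp (k * r)) (Ici 0) :=
    antitoneOn_of_hasDerivWithinAt_nonpos (convex_Ici 0)
      (fun s hs => (hg s hs).continuousAt.continuousWithinAt)
      (fun s hs => (hg s (interior_subset hs)).hasDerivWithinAt)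
      (fun s hs => mul_nonpos_of_nonpos_of_nonneg (by linarith [hle s (interior_subset hs)])
        (Real.exp_pos _).le)
  calc v t = v t * Real.exp (k * t) * Real.exp (-k * t) := by
        rw [mul_assoc, ← Real.exp_add]; simp
    _ ≤ v 0 * Real.exp (-k * t) := by
        gcongr
        simpa using hanti self_mem_Ici ht ht

end Calculus

section Dissipative

variable {ι : Type*} [Fintype ι] {P : Matrix ι ι ℝ} {F : (ι → ℝ) → ι → ℝ} {μ β : ℝ}

lemma exists_isFixedPt_of_lyapunov_contraction {E : Type*} [NormedAddCommGroup E] [CompleteSpace E]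
    {V : E → ℝ} {T : E → E} {ρ : ℝ} (hμ : 0 < μ) (hβ : 0 < β)
    (hlow : ∀ e, μ * ‖e‖ ^ 2 ≤ V e) (hup : ∀ e, V e ≤ β * ‖e‖ ^ 2) (hρ0 : 0 ≤ ρ) (hρ1 : ρ < 1)
    (hT : ∀ z y, V (T z - T y) ≤ ρ * V (z - y)) : ∃ x, IsFixedPt T x := by
  have hiter : ∀ k z y, V (T^[k] z - T^[k] y) ≤ ρ ^ k * V (z - y) := by
    intro k
    induction k with
    | zero => simp
    | succ k ih =>
      intro z y
      rw [iterate_succ_apply', iterate_succ_apply', pow_succ', mul_assoc]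
      exact (hT _ _).trans (mul_le_mul_of_nonneg_left (ih z y) hρ0)
  obtain ⟨k, hk⟩ := exists_pow_lt_of_lt_one (by positivity : 0 < μ / (4 * β)) hρ1
  have hcontr : ContractingWith (1 / 2) T^[k] := by
    refine ⟨by norm_num, ?_⟩
    refine LipschitzWith.of_dist_le_mul fun z y => ?_
    rw [dist_eq_norm, dist_eq_norm, NNReal.coe_div, NNReal.coe_one, NNReal.coe_two,
      ← pow_le_pow_iff_left₀ (norm_nonneg _) (by positivity) two_ne_zero]
    have h1 := (hlow _).trans ((hiter k z y).trans
      (mul_le_mul_of_nonneg_left (hup (z - y)) (pow_nonneg hρ0 k)))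
    have h2 : ρ ^ k * β ≤ μ / 4 := by
      rw [lt_div_iff₀ (by positivity)] at hk; linarith
    nlinarith [sq_nonneg ‖z - y‖]
  exact ⟨_, hcontr.isFixedPt_fixedPoint_iterate⟩

lemma exists_zero_of_dissipative (hP : P.IsSymm) (hμ : 0 < μ) (hβ : 0 < β)
    (hlow : ∀ e, μ * ‖e‖ ^ 2 ≤ e ⬝ᵥ (P *ᵥ e)) (hup : ∀ e, e ⬝ᵥ (P *ᵥ e) ≤ β * ‖e‖ ^ 2)
    (hdiss : ∀ z y, (z - y) ⬝ᵥ (P *ᵥ (F z - F y)) ≤ -μ * ‖z - y‖ ^ 2)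
    {L : ℝ≥0} (hF : LipschitzWith L F) : ∃ x, F x = 0 := by
  set ε := μ / (β * L ^ 2 + 1)
  have hε : 0 < ε := by positivity
  have hεL : ε * (β * L ^ 2) ≤ μ := by
    rw [div_mul_eq_mul_div, div_le_iff₀ (by positivity)]
    nlinarith
  have hT : ∀ z y, ((z + ε • F z) - (y + ε • F y)) ⬝ᵥ (P *ᵥ ((z + ε • F z) - (y + ε • F y))) ≤
      max (1 - ε * μ / β) 0 * ((z - y) ⬝ᵥ (P *ᵥ (z - y))) := by
    intro z y
    have hΔ : ‖F z - F y‖ ^ 2 ≤ L ^ 2 * ‖z - y‖ ^ 2 := by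
      rw [← mul_pow]
      gcongr
      simpa [dist_eq_norm] using hF.dist_le_mul z y
    have hV := hup (z - y)
    have hVΔ := hup (F z - F y)
    have hV0 := (hlow (z - y)).trans' (by positivity)
    rw [show (z + ε • F z) - (y + ε • F y) = (z - y) + ε • (F z - F y) by module,
      dotProduct_mulVec_add_smul hP]
    calc _ ≤ (z - y) ⬝ᵥ (P *ᵥ (z - y)) - ε * μ * ‖z - y‖ ^ 2 := by
          have h1 := mul_le_mul_of_nonneg_left (hdiss z y) (by positivity : (0 : ℝ) ≤ 2 * ε)
          have h2 := mul_le_mul_of_nonneg_left (hVΔ.trans (mul_le_mul_of_nonneg_left hΔ hβ.le))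
            (sq_nonneg ε)
          have h3 := mul_le_mul_of_nonneg_right (mul_le_mul_of_nonneg_left hεL hε.le)
            (sq_nonneg ‖z - y‖)
          linarith
      _ ≤ (1 - ε * μ / β) * ((z - y) ⬝ᵥ (P *ᵥ (z - y))) := by
          have h := mul_le_mul_of_nonneg_left hV (by positivity : 0 ≤ ε * μ / β)
          have hc : ε * μ / β * (β * ‖z - y‖ ^ 2) = ε * μ * ‖z - y‖ ^ 2 := by field_simp
          linarith
      _ ≤ _ := mul_le_mul_of_nonneg_right (le_max_left _ _) hV0
  obtain ⟨x, hx⟩ := exists_isFixedPt_of_lyapunov_contraction hμ hβ hlow hup (le_max_right _ _)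
    (max_lt (by linarith [div_pos (mul_pos hε hμ) hβ]) one_pos) hT
  exact ⟨x, by simpa [IsFixedPt, hε.ne'] using hx⟩

lemma eq_of_dissipative (hμ : 0 < μ)
    (hdiss : ∀ z y, (z - y) ⬝ᵥ (P *ᵥ (F z - F y)) ≤ -μ * ‖z - y‖ ^ 2) {x y : ι → ℝ}
    (hx : F x = 0) (hy : F y = 0) : x = y := by
  have h := hdiss x y
  rw [hx, hy, sub_self, mulVec_zero, dotProduct_zero, neg_mul, neg_nonneg] at h
  have : ‖x - y‖ ^ 2 = 0 := le_antisymm (nonpos_of_mul_nonpos_right h hμ) (sq_nonneg _)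
  simpa [sub_eq_zero] using this

lemma exists_exp_decay_of_dissipative (hP : P.IsSymm) (hμ : 0 < μ) (hβ : 0 < β)
    (hlow : ∀ e, μ * ‖e‖ ^ 2 ≤ e ⬝ᵥ (P *ᵥ e)) (hup : ∀ e, e ⬝ᵥ (P *ᵥ e) ≤ β * ‖e‖ ^ 2)
    (hdiss : ∀ z y, (z - y) ⬝ᵥ (P *ᵥ (F z - F y)) ≤ -μ * ‖z - y‖ ^ 2)
    {τ : ℝ} (hτ : 0 < τ) {xs : ι → ℝ} (hxs : F xs = 0) :
    ∃ c > (0 : ℝ), ∃ lam > (0 : ℝ), ∀ x : ℝ → ι → ℝ,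
      (∀ t, 0 ≤ t → HasDerivAt x (τ⁻¹ • F (x t)) t) →
      ∀ t, 0 ≤ t → ‖x t - xs‖ ≤ c * Real.exp (-lam * t) * ‖x 0 - xs‖ := by
  set k := 2 * μ / (τ * β)
  refine ⟨√(β / μ), by positivity, k / 2, by positivity, fun x hx t ht => ?_⟩
  have hv : ∀ s, 0 ≤ s → HasDerivAt (fun r => (x r - xs) ⬝ᵥ (P *ᵥ (x r - xs)))
      (2 * τ⁻¹ * ((x s - xs) ⬝ᵥ (P *ᵥ (F (x s) - F xs)))) s := fun s hs => by
    have he := (hx s hs).sub_const xs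
    refine (he.dotProduct (he.matrix_mulVec P)).congr_deriv ?_
    rw [hxs, sub_zero, dotProduct_mulVec_comm hP _ (x s - xs), mulVec_smul, dotProduct_smul,
      smul_eq_mul]
    ring
  have hle : ∀ s, 0 ≤ s → 2 * τ⁻¹ * ((x s - xs) ⬝ᵥ (P *ᵥ (F (x s) - F xs))) ≤
      -k * ((x s - xs) ⬝ᵥ (P *ᵥ (x s - xs))) := fun s _ => by
    have h1 := mul_le_mul_of_nonneg_left (hdiss (x s) xs) (by positivity : 0 ≤ 2 * τ⁻¹)
    have h2 := mul_le_mul_of_nonneg_left (hup (x s - xs)) (by positivity : 0 ≤ k)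
    have hk : k * β = 2 * τ⁻¹ * μ := by simp only [k]; field_simp
    nlinarith
  have hdecay := le_mul_exp_of_hasDerivAt_le hv hle ht
  have h0 := mul_le_mul_of_nonneg_right (hup (x 0 - xs)) (Real.exp_pos (-k * t)).le
  have hsq : ‖x t - xs‖ ^ 2 ≤ (√(β / μ) * Real.exp (-(k / 2) * t) * ‖x 0 - xs‖) ^ 2 := by
    rw [mul_pow, mul_pow, Real.sq_sqrt (by positivity), ← Real.exp_nat_mul,
      show ((2 : ℕ) : ℝ) * (-(k / 2) * t) = -k * t by push_cast; ring,
      div_mul_eq_mul_div, div_mul_eq_mul_div, le_div_iff₀ hμ]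
    linarith [hlow (x t - xs)]
  exact (pow_le_pow_iff_left₀ (norm_nonneg _) (by positivity) two_ne_zero).1 hsq

end Dissipative

theorem stmt13_general {n : ℕ} (τ : ℝ) (hτ : 0 < τ) (W : Matrix (Fin n) (Fin n) ℝ)
    (m : Fin n → ℝ≥0∞)
    (hL : TotallyLStable W) (d : Fin n → ℝ) :
    ∃ xs : Fin n → ℝ, xs = clamp m (W.mulVec xs + d) ∧
      (∀ y : Fin n → ℝ, y = clamp m (W.mulVec y + d) → y = xs) ∧
      ∃ c > (0 : ℝ), ∃ lam > (0 : ℝ), ∀ x : ℝ → (Fin n → ℝ),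
        (∀ i, 0 ≤ x 0 i ∧ ENNReal.ofReal (x 0 i) ≤ m i) →
        (∀ t, 0 ≤ t → HasDerivAt x (τ⁻¹ • (-(x t) + clamp m (W.mulVec (x t) + d))) t) →
        ∀ t, 0 ≤ t → ‖x t - xs‖ ≤ c * Real.exp (-lam * t) * ‖x 0 - xs‖ := by
  obtain ⟨P, hP, hQ⟩ := hL
  have hPs : P.IsSymm := isHermitian_iff_isSymm.1 hP.1
  obtain ⟨μ, hμ, hμD⟩ := exists_pos_mul_sq_norm_le (continuous_minDissipation P W)
    (minDissipation_smul P W) fun e he => minDissipation_pos hP hQ he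
  obtain ⟨β, hβ, hup⟩ := exists_le_mul_sq_norm (f := fun e => e ⬝ᵥ (P *ᵥ e)) (by fun_prop)
    (dotProduct_mulVec_smul_self P)
  have hlow e : μ * ‖e‖ ^ 2 ≤ e ⬝ᵥ (P *ᵥ e) := (hμD e).trans (minDissipation_le P W e)
  have hdiss := dotProduct_mulVec_thresholdField_sub_le hPs hμD m d
  obtain ⟨L, hLip⟩ := exists_lipschitzWith_thresholdField m W d
  obtain ⟨xs, hxs⟩ := exists_zero_of_dissipative hPs hμ hβ hlow hup hdiss hLip
  obtain ⟨c, hc, lam, hlam, hdecay⟩ :=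
    exists_exp_decay_of_dissipative hPs hμ hβ hlow hup hdiss hτ hxs
  refine ⟨xs, neg_add_eq_zero.1 hxs, fun y hy => eq_of_dissipative hμ hdiss
    (neg_add_eq_zero.2 hy) hxs, c, hc, lam, hlam, fun x _ hx => hdecay x hx⟩

theorem stmt13 {n : ℕ} (τ : ℝ) (hτ : 0 < τ) (W : Matrix (Fin n) (Fin n) ℝ)
    (m : Fin n → ℝ≥0∞) (hm : ∀ i, 0 < m i)
    (hL : TotallyLStable W) (d : Fin n → ℝ) :
    ∃ xs : Fin n → ℝ, xs = clamp m (W.mulVec xs + d) ∧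
      (∀ y : Fin n → ℝ, y = clamp m (W.mulVec y + d) → y = xs) ∧
      ∃ c > (0 : ℝ), ∃ lam > (0 : ℝ), ∀ x : ℝ → (Fin n → ℝ),
        (∀ i, 0 ≤ x 0 i ∧ ENNReal.ofReal (x 0 i) ≤ m i) →
        (∀ t, 0 ≤ t → HasDerivAt x (τ⁻¹ • (-(x t) + clamp m (W.mulVec (x t) + d))) t) →
        ∀ t, 0 ≤ t → ‖x t - xs‖ ≤ c * Real.exp (-lam * t) * ‖x 0 - xs‖ :=
  stmt13_general τ hτ W m hL d
end

section
/- For the linear-threshold dynamics τẋ = −x + [Wx + d]₀^m: if for all d ∈ ℝⁿ the network has a unique locally asymptotically stable equilibrium, then −I + W is totally Hurwitz. In particular, for any σ ∈ {0,1}ⁿ, choosing d = (2I − W)σ − 𝟙 makes x* = σ an equilibrium interior to the switching region Ω_σ, where the linearization is −I + ΣW. -/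
open Matrix
open scoped ENNReal

/-
Fix S ⊆ {1, …, n}, let σ be its indicator vector and Σ = diag σ. For d = (2I − W)σ − 𝟙 one has
Wσ + d = 2σ − 𝟙, so σ is an equilibrium lying strictly inside its switching region, and near σ
the dynamics are linear: τẋ = (−I + ΣW)(x − σ). Extending an eigenvector of the principal
submatrix (−I + W)_SS by zero shows that each of its eigenvalues μ is an eigenvalue of −I + ΣW,
hence has a left eigenvector u. Along a trajectory that stays near σ,
u ⬝ (x(t) − σ) = e^{μt/τ} u ⬝ (x(0) − σ), which does not tend to 0 when Re μ ≥ 0 and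
u ⬝ (x(0) − σ) ≠ 0. Since the vector field is globally Lipschitz, such trajectories exist for
all t ≥ 0, contradicting local asymptotic stability.
-/

open Set Filter Topology Metric
open scoped NNReal

section GlobalSolution

variable {E : Type*} [NormedAddCommGroup E] [NormedSpace ℝ E]
  {f : E → E} {K : ℝ≥0}

theorem LipschitzWith.eqOn_Ioo_of_hasDerivAt (hf : LipschitzWith K f) {x y : ℝ → E}
    {a b t₀ : ℝ} (ht₀ : t₀ ∈ Ioo a b) (hx : ∀ t ∈ Ioo a b, HasDerivAt x (f (x t)) t)
    (hy : ∀ t ∈ Ioo a b, HasDerivAt y (f (y t)) t) (h : x t₀ = y t₀) : EqOn x y (Ioo a b) :=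
  ODE_solution_unique_of_mem_Ioo (v := fun _ => f) (s := fun _ => univ)
    (fun _ _ => hf.lipschitzOnWith) ht₀ (fun t ht => ⟨hx t ht, mem_univ _⟩)
    (fun t ht => ⟨hy t ht, mem_univ _⟩) h

theorem LipschitzWith.exists_extend_hasDerivAt (hf : LipschitzWith K f) {h : ℝ}
    (hloc : ∀ (t₀ : ℝ) (c : E), ∃ g : ℝ → E, g t₀ = c ∧
      ∀ t ∈ Ioo (t₀ - h) (t₀ + h), HasDerivAt g (f (g t)) t)
    {x : ℝ → E} {a t₁ T : ℝ} (ht₁ : t₁ ∈ Ioo a T) (hT : T ≤ t₁ + h)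
    (hx : ∀ t ∈ Ioo a T, HasDerivAt x (f (x t)) t) :
    ∃ y : ℝ → E, EqOn y x (Iic t₁) ∧ ∀ t ∈ Ioo a (t₁ + h), HasDerivAt y (f (y t)) t := by
  classical
  obtain ⟨g, hg₁, hg⟩ := hloc t₁ (x t₁)
  have hxg : EqOn x g (Ioo (max a (t₁ - h)) T) := hf.eqOn_Ioo_of_hasDerivAt
    ⟨max_lt ht₁.1 (by linarith [ht₁.2]), ht₁.2⟩
    (fun t ht => hx t ⟨(le_max_left _ _).trans_lt ht.1, ht.2⟩)
    (fun t ht => hg t ⟨(le_max_right _ _).trans_lt ht.1, by linarith [ht.2]⟩) hg₁.symm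
  set y := (Iic t₁).piecewise x g
  refine ⟨y, fun t ht => piecewise_eq_of_mem _ _ _ ht, fun t ht => ?_⟩
  rcases lt_or_ge t t₁ with htt₁ | htt₁
  · have hyx : y =ᶠ[𝓝 t] x := eventually_of_mem (Iio_mem_nhds htt₁)
      fun s hs => piecewise_eq_of_mem _ _ _ (show s ≤ t₁ from hs.le)
    rw [hyx.eq_of_nhds]
    exact (hx t ⟨ht.1, htt₁.trans ht₁.2⟩).congr_of_eventuallyEq hyx
  · have hmem : t ∈ Ioo (max a (t₁ - h)) (t₁ + h) :=
      ⟨max_lt ht.1 (by linarith [ht₁.1, ht₁.2]), ht.2⟩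
    have hyg : y =ᶠ[𝓝 t] g := eventually_of_mem (Ioo_mem_nhds hmem.1 hmem.2) fun s hs => by
      by_cases hs₁ : s ≤ t₁
      · rw [show y s = x s from piecewise_eq_of_mem _ _ _ (show s ∈ Iic t₁ from hs₁)]
        exact hxg ⟨hs.1, hs₁.trans_lt ht₁.2⟩
      · exact piecewise_eq_of_notMem _ _ _ hs₁
    rw [hyg.eq_of_nhds]
    exact (hg t ⟨(le_max_right _ _).trans_lt hmem.1, hmem.2⟩).congr_of_eventuallyEq hyg

theorem LipschitzWith.exists_forall_mem_Ioi_hasDerivAt (hf : LipschitzWith K f) {a : ℝ}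
    (ha : a < 0) {x₀ : E}
    (hsol : ∀ T, ∃ x : ℝ → E, x 0 = x₀ ∧ ∀ t ∈ Ioo a T, HasDerivAt x (f (x t)) t) :
    ∃ x : ℝ → E, x 0 = x₀ ∧ ∀ t ∈ Ioi a, HasDerivAt x (f (x t)) t := by
  choose X hX₀ hX using hsol
  have hagree : ∀ {s T : ℝ}, 0 < T → s ∈ Ioo a T → X (|s| + 1) s = X T s := fun {s T} hT hs =>
    hf.eqOn_Ioo_of_hasDerivAt (a := a) (b := min (|s| + 1) T) (t₀ := 0)
      ⟨ha, lt_min (by positivity) hT⟩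
      (fun t ht => hX _ t ⟨ht.1, ht.2.trans_le (min_le_left _ _)⟩)
      (fun t ht => hX _ t ⟨ht.1, ht.2.trans_le (min_le_right _ _)⟩)
      ((hX₀ _).trans (hX₀ _).symm) ⟨hs.1, lt_min (by linarith [le_abs_self s]) hs.2⟩
  refine ⟨fun t => X (|t| + 1) t, hX₀ _, fun t ht => ?_⟩
  have hT : 0 < |t| + 1 := by positivity
  have ht' : t ∈ Ioo a (|t| + 1) := ⟨ht, by linarith [le_abs_self t]⟩
  have hxX : (fun s => X (|s| + 1) s) =ᶠ[𝓝 t] X (|t| + 1) :=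
    eventually_of_mem (Ioo_mem_nhds ht'.1 ht'.2) fun s hs => hagree hT hs
  exact (hX _ t ht').congr_of_eventuallyEq hxX

variable [CompleteSpace E]

-- On the ball of radius ‖f c‖ + 1 around c the field is bounded by (K + 1)(‖f c‖ + 1), so the
-- Picard–Lindelöf existence time 1 / (K + 1) does not depend on c.
theorem LipschitzWith.exists_forall_mem_Ioo_hasDerivAt (hf : LipschitzWith K f) :
    ∃ h > (0 : ℝ), ∀ (t₀ : ℝ) (c : E), ∃ g : ℝ → E, g t₀ = c ∧
      ∀ t ∈ Ioo (t₀ - h) (t₀ + h), HasDerivAt g (f (g t)) t := by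
  have hh : (0 : ℝ) < 1 / (K + 1) := by positivity
  refine ⟨1 / (K + 1), hh, fun t₀ c => ?_⟩
  set a : ℝ≥0 := ‖f c‖₊ + 1
  have hpl : IsPicardLindelof (fun _ => f) (tmin := t₀ - 1 / (K + 1)) (tmax := t₀ + 1 / (K + 1))
      ⟨t₀, by constructor <;> linarith⟩ c a 0 (‖f c‖₊ + K * a) K := by
    apply IsPicardLindelof.of_time_independent
    · intro x hx
      calc ‖f x‖ ≤ ‖f c‖ + ‖f x - f c‖ := norm_le_insert' _ _
        _ ≤ ‖f c‖ + K * ‖x - c‖ := by gcongr; exact hf.norm_sub_le x c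
        _ ≤ ‖f c‖ + K * a := by gcongr; exact mem_closedBall_iff_norm.mp hx
    · exact hf.lipschitzOnWith
    · have ha : ‖f c‖ ≤ (a : ℝ) := by simp [a]
      simp only [add_sub_cancel_left, sub_sub_cancel, max_self, NNReal.coe_zero, sub_zero,
        NNReal.coe_add, NNReal.coe_mul, coe_nnnorm]
      rw [mul_one_div, div_le_iff₀ (by positivity)]
      nlinarith [K.coe_nonneg]
  obtain ⟨g, hg₀, hg⟩ := hpl.exists_eq_forall_mem_Icc_hasDerivWithinAt₀
  exact ⟨g, hg₀, fun t ht => (hg t (Ioo_subset_Icc_self ht)).hasDerivAt (Icc_mem_nhds ht.1 ht.2)⟩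

theorem LipschitzWith.exists_forall_hasDerivAt (hf : LipschitzWith K f) (x₀ : E) :
    ∃ x : ℝ → E, x 0 = x₀ ∧ ∀ t, 0 ≤ t → HasDerivAt x (f (x t)) t := by
  obtain ⟨h, hh, hloc⟩ := hf.exists_forall_mem_Ioo_hasDerivAt
  have hstep : ∀ k : ℕ, ∃ x : ℝ → E, x 0 = x₀ ∧
      ∀ t ∈ Ioo (-h) (k * (h / 2) + h), HasDerivAt x (f (x t)) t := by
    intro k
    induction k with
    | zero => simpa using hloc 0 x₀
    | succ k ih =>
      obtain ⟨x, hx₀, hx⟩ := ih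
      have ht₁ : k * (h / 2) + h / 2 ∈ Ioo (-h) (k * (h / 2) + h) := by
        constructor <;> nlinarith [k.cast_nonneg (α := ℝ)]
      obtain ⟨y, hyx, hy⟩ := hf.exists_extend_hasDerivAt hloc ht₁ (by linarith) hx
      refine ⟨y, (hyx (show (0 : ℝ) ≤ _ by positivity)).trans hx₀, fun t ht => hy t ?_⟩
      convert ht using 2
      push_cast
      ring
  have hsol : ∀ T, ∃ x : ℝ → E, x 0 = x₀ ∧ ∀ t ∈ Ioo (-h) T, HasDerivAt x (f (x t)) t :=
    fun T => by
      obtain ⟨k, hk⟩ := exists_nat_gt (T / (h / 2))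
      obtain ⟨x, hx₀, hx⟩ := hstep k
      refine ⟨x, hx₀, fun t ht => hx t ⟨ht.1, ht.2.trans ?_⟩⟩
      rw [div_lt_iff₀ (by positivity)] at hk
      linarith
  obtain ⟨x, hx₀, hx⟩ := hf.exists_forall_mem_Ioi_hasDerivAt (neg_lt_zero.2 hh) hsol
  exact ⟨x, hx₀, fun t ht => hx t (show -h < t by linarith)⟩

end GlobalSolution

namespace Matrix

open Module.End

variable {ι R : Type*} [Fintype ι] [DecidableEq ι] [CommRing R]

theorem exists_vecMul_eq_smul_of_hasEigenvalue [IsDomain R] {B : Matrix ι ι R} {μ : R}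
    (h : HasEigenvalue (toLin' B) μ) : ∃ w ≠ 0, w ᵥ* B = μ • w := by
  have hT : HasEigenvalue (toLin' Bᵀ) μ := by
    rw [hasEigenvalue_iff_isRoot_charpoly, charpoly_toLin', charpoly_transpose,
      ← charpoly_toLin', ← hasEigenvalue_iff_isRoot_charpoly]
    exact h
  obtain ⟨w, hw⟩ := hT.exists_hasEigenvector
  exact ⟨w, hw.2, by rw [← mulVec_transpose, ← toLin'_apply]; exact hw.apply_eq_smul⟩

theorem mulVec_extendByZero (A : Matrix ι ι R) (S : Finset ι) (v : S → R) (i : ι) :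
    (A *ᵥ fun j => if h : j ∈ S then v ⟨j, h⟩ else 0) i =
      ∑ j : S, A i j * v j := by
  calc _ = ∑ j ∈ S, A i j * (if h : j ∈ S then v ⟨j, h⟩ else 0) :=
        (Finset.sum_subset (Finset.subset_univ S) fun j _ hj => by simp [hj]).symm
    _ = _ := by
      rw [← Finset.sum_coe_sort S]
      exact Finset.sum_congr rfl fun j _ => by simp [j.2]

theorem hasEigenvalue_of_hasEigenvalue_submatrix (A : Matrix ι ι R) (S : Finset ι) {μ : R}
    (h : HasEigenvalue (toLin' ((-1 + A).submatrix ((↑) : S → ι) (↑))) μ) :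
    HasEigenvalue (toLin' (-1 + diagonal (fun i => if i ∈ S then 1 else 0) * A)) μ := by
  obtain ⟨v, hv⟩ := h.exists_hasEigenvector
  have hv' : (-1 + A).submatrix ((↑) : S → ι) (↑) *ᵥ v = μ • v := by
    rw [← toLin'_apply]; exact hv.apply_eq_smul
  set e : ι → R := fun j => if h : j ∈ S then v ⟨j, h⟩ else 0
  have he : ∀ j : S, e j = v j := fun j => dif_pos j.2
  have hAe : ∀ j : S, ((-1 + A : Matrix ι ι R) *ᵥ e) j = μ * v j := fun j =>
    (mulVec_extendByZero (-1 + A) S v j).trans (congrFun hv' j)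
  refine hasEigenvalue_of_hasEigenvector (x := e) ⟨?_, fun he0 => hv.2 ?_⟩
  · rw [mem_eigenspace_iff, toLin'_apply]
    funext i
    rw [add_mulVec, ← mulVec_mulVec, Pi.add_apply, mulVec_diagonal, Pi.smul_apply, smul_eq_mul]
    by_cases hi : i ∈ S
    · rw [if_pos hi, one_mul, ← Pi.add_apply, ← add_mulVec, hAe ⟨i, hi⟩, he ⟨i, hi⟩]
    · simp [e, hi, neg_mulVec]
  · funext j
    rw [← he, he0, Pi.zero_apply, Pi.zero_apply]

theorem hasEigenvalue_map_ofReal_of_submatrix (W : Matrix ι ι ℝ) (S : Finset ι) {μ : ℂ}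
    (h : HasEigenvalue (toLin' (((-1 + W).submatrix ((↑) : S → ι) (↑)).map Complex.ofReal)) μ) :
    HasEigenvalue (toLin'
      ((-1 + diagonal (fun i => if i ∈ S then (1 : ℝ) else 0) * W).map Complex.ofReal)) μ := by
  have hsub : ((-1 + W).submatrix ((↑) : S → ι) ((↑) : S → ι)).map Complex.ofReal =
      (-1 + W.map Complex.ofReal).submatrix ((↑) : S → ι) ((↑) : S → ι) := by
    ext i j
    by_cases hij : i = j <;> simp [hij]
  have hdiag : (-1 + diagonal (fun i => if i ∈ S then (1 : ℝ) else 0) * W).map Complex.ofReal =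
      -1 + diagonal (fun i => if i ∈ S then 1 else 0) * W.map Complex.ofReal := by
    ext i j
    by_cases hi : i ∈ S <;> simp [one_apply, diagonal_mul, hi, apply_ite Complex.ofReal]
  rw [hdiag]
  exact (W.map _).hasEigenvalue_of_hasEigenvalue_submatrix S (hsub ▸ h)

end Matrix

theorem norm_le_norm_of_hasDerivAt_mul {g : ℝ → ℂ} {μ : ℂ} (hμ : 0 ≤ μ.re)
    (hg : ∀ t, 0 ≤ t → HasDerivAt g (μ * g t) t) {t : ℝ} (ht : 0 ≤ t) : ‖g 0‖ ≤ ‖g t‖ := by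
  have hexp : ∀ s : ℝ, HasDerivAt (fun s : ℝ => Complex.exp (μ * s) * g 0)
      (μ * (Complex.exp (μ * s) * g 0)) s := fun s => by
    simpa [mul_comm, mul_left_comm, mul_assoc] using
      (((hasDerivAt_id (s : ℂ)).const_mul μ).cexp.comp_ofReal (z := s)).mul_const (g 0)
  have heq := ODE_solution_unique (v := fun _ z => μ • z) (fun _ => lipschitzWith_smul μ)
    (fun s hs => (hg s hs.1).continuousAt.continuousWithinAt)
    (fun s hs => (hg s hs.1).hasDerivWithinAt)
    (fun s _ => (hexp s).continuousAt.continuousWithinAt)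
    (fun s _ => (hexp s).hasDerivWithinAt) (by norm_num) ⟨ht, le_rfl⟩
  rw [heq, norm_mul, Complex.norm_exp]
  refine le_mul_of_one_le_left (norm_nonneg _) (Real.one_le_exp ?_)
  simpa using mul_nonneg hμ ht

theorem dotProduct_eq_zero_of_tendsto {ι : Type*} [Fintype ι] {A : Matrix ι ι ℝ} {u : ι → ℂ}
    {μ : ℂ} (hu : u ᵥ* A.map (↑) = μ • u) (hμ : 0 ≤ μ.re) {x : ℝ → ι → ℝ} {p : ι → ℝ}
    (hx : ∀ t, 0 ≤ t → HasDerivAt x (A *ᵥ (x t - p)) t) (hlim : Tendsto x atTop (𝓝 p)) :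
    u ⬝ᵥ (fun i => ((x 0 - p) i : ℂ)) = 0 := by
  set g : ℝ → ℂ := fun t => u ⬝ᵥ fun i => ((x t - p) i : ℂ)
  have hg : ∀ t, 0 ≤ t → HasDerivAt g (μ * g t) t := fun t ht => by
    have hcoord : HasDerivAt g (u ⬝ᵥ fun i => ((A *ᵥ (x t - p)) i : ℂ)) t :=
      HasDerivAt.fun_sum fun i _ =>
        (((hasDerivAt_pi.1 (hx t ht) i).sub_const (p i)).ofReal_comp).const_mul (u i)
    have hcast : (fun i => ((A *ᵥ (x t - p)) i : ℂ)) = A.map (↑) *ᵥ fun i => ((x t - p) i : ℂ) :=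
      funext (RingHom.map_mulVec Complex.ofRealHom A _)
    rwa [hcast, dotProduct_mulVec, hu, smul_dotProduct, smul_eq_mul] at hcoord
  have hg0 : Tendsto g atTop (𝓝 0) := by
    have hℓ : Continuous fun y : ι → ℝ => u ⬝ᵥ fun i => ((y - p) i : ℂ) := by
      simp only [dotProduct]; fun_prop
    have hℓp : (u ⬝ᵥ fun i => ((p - p) i : ℂ)) = 0 := by simp [dotProduct]
    exact hℓp ▸ (hℓ.tendsto p).comp hlim
  exact norm_le_zero_iff.1 <| ge_of_tendsto (norm_zero (E := ℂ) ▸ hg0.norm) <|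
    (eventually_ge_atTop 0).mono fun t ht => norm_le_norm_of_hasDerivAt_mul hμ hg ht

section Clamp

variable {ι : Type*}

theorem lipschitzWith_one_toReal_min_ofReal (M : ℝ≥0∞) :
    LipschitzWith 1 fun y : ℝ => (min (ENNReal.ofReal y) M).toReal := by
  rcases eq_or_ne M ⊤ with rfl | hM
  · simpa [ENNReal.toReal_ofReal'] using LipschitzWith.id.max_const 0
  · simpa [ENNReal.toReal_min ENNReal.ofReal_ne_top hM, ENNReal.toReal_ofReal'] using
      (LipschitzWith.id.max_const 0).min_const M.toReal

theorem lipschitzWith_one_clamp [Fintype ι] (m : ι → ℝ≥0∞) : LipschitzWith 1 (clamp m) :=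
  LipschitzWith.of_dist_le_mul fun y z => (dist_pi_le_iff (by positivity)).2 fun i =>
    ((lipschitzWith_one_toReal_min_ofReal (m i)).dist_le_mul (y i) (z i)).trans
      (by gcongr; exact dist_le_pi_dist y z i)

theorem exists_lipschitzWith_vectorField [Fintype ι] (τ : ℝ) (W : Matrix ι ι ℝ) (m : ι → ℝ≥0∞)
    (d : ι → ℝ) : ∃ K, LipschitzWith K fun y => τ⁻¹ • (-y + clamp m (W *ᵥ y + d)) := by
  set T := LinearMap.toContinuousLinearMap W.mulVecLin
  exact ⟨_, (lipschitzWith_smul τ⁻¹).comp (LipschitzWith.id.neg.add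
    ((lipschitzWith_one_clamp m).comp (T.lipschitz.add (LipschitzWith.const d))))⟩

end Clamp

section SwitchingRegion

variable {ι : Type*} {m : ι → ℝ≥0∞} {σ : ι → ℝ}

-- The paper's region Ω_σ, described in the variable v = W x + d.
def switchingRegion (m : ι → ℝ≥0∞) (σ : ι → ℝ) : Set (ι → ℝ) :=
  {v | ∀ i, (σ i = 1 → 0 < v i ∧ ENNReal.ofReal (v i) < m i) ∧ (σ i = 0 → v i < 0)}

theorem isOpen_switchingRegion [Finite ι] : IsOpen (switchingRegion m σ) := by
  simp only [switchingRegion, ofPred_forall, ofPred_and]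
  refine isOpen_iInter_of_finite fun i => (isOpen_iInter_of_finite fun _ => ?_).inter
    (isOpen_iInter_of_finite fun _ => ?_)
  · exact (isOpen_lt continuous_const (continuous_apply i)).inter
      (isOpen_lt (ENNReal.continuous_ofReal.comp (continuous_apply i)) continuous_const)
  · exact isOpen_lt (continuous_apply i) continuous_const

theorem clamp_eq_of_mem_switchingRegion [Fintype ι] [DecidableEq ι]
    (hσ : ∀ i, σ i = 0 ∨ σ i = 1) {v : ι → ℝ} (hv : v ∈ switchingRegion m σ) :
    clamp m v = diagonal σ *ᵥ v := by
  funext i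
  rw [mulVec_diagonal, clamp]
  rcases hσ i with h | h
  · rw [h, zero_mul, ENNReal.ofReal_of_nonpos ((hv i).2 h).le, min_eq_left zero_le,
      ENNReal.toReal_zero]
  · rw [h, one_mul, min_eq_left ((hv i).1 h).2.le, ENNReal.toReal_ofReal ((hv i).1 h).1.le]

theorem two_smul_sub_one_mem_switchingRegion (hm : ∀ i, 1 < m i)
    (hσ : ∀ i, σ i = 0 ∨ σ i = 1) : (2 : ℝ) • σ - 1 ∈ switchingRegion m σ := fun i => by
  rcases hσ i with h | h <;> norm_num [h, hm i]

end SwitchingRegion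

section VertexEquilibrium

variable {ι : Type*} [Fintype ι] [DecidableEq ι] {m : ι → ℝ≥0∞} {σ : ι → ℝ}

def vertexInput (W : Matrix ι ι ℝ) (σ : ι → ℝ) : ι → ℝ :=
  ((2 : ℝ) • (1 : Matrix ι ι ℝ) - W) *ᵥ σ - 1

theorem mulVec_add_vertexInput (W : Matrix ι ι ℝ) (σ y : ι → ℝ) :
    W *ᵥ y + vertexInput W σ = W *ᵥ (y - σ) + ((2 : ℝ) • σ - 1) := by
  simp only [vertexInput, sub_mulVec, smul_mulVec, one_mulVec, mulVec_sub]
  abel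

theorem diagonal_mulVec_two_smul_sub_one (hσ : ∀ i, σ i = 0 ∨ σ i = 1) :
    diagonal σ *ᵥ ((2 : ℝ) • σ - 1) = σ := by
  funext i
  rcases hσ i with h | h <;> norm_num [mulVec_diagonal, h]

theorem mulVec_add_vertexInput_mem_switchingRegion (hm : ∀ i, 1 < m i)
    (hσ : ∀ i, σ i = 0 ∨ σ i = 1) (W : Matrix ι ι ℝ) :
    W *ᵥ σ + vertexInput W σ ∈ switchingRegion m σ := by
  rw [mulVec_add_vertexInput, sub_self, mulVec_zero, zero_add]
  exact two_smul_sub_one_mem_switchingRegion hm hσ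

theorem eq_clamp_vertexInput (hm : ∀ i, 1 < m i) (hσ : ∀ i, σ i = 0 ∨ σ i = 1)
    (W : Matrix ι ι ℝ) : σ = clamp m (W *ᵥ σ + vertexInput W σ) := by
  rw [clamp_eq_of_mem_switchingRegion hσ (mulVec_add_vertexInput_mem_switchingRegion hm hσ W),
    mulVec_add_vertexInput, sub_self, mulVec_zero, zero_add,
    diagonal_mulVec_two_smul_sub_one hσ]

theorem neg_add_clamp_vertexInput (hσ : ∀ i, σ i = 0 ∨ σ i = 1) {W : Matrix ι ι ℝ}
    {y : ι → ℝ} (hy : W *ᵥ y + vertexInput W σ ∈ switchingRegion m σ) :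
    -y + clamp m (W *ᵥ y + vertexInput W σ) = (-1 + diagonal σ * W) *ᵥ (y - σ) := by
  rw [clamp_eq_of_mem_switchingRegion hσ hy, mulVec_add_vertexInput, mulVec_add,
    diagonal_mulVec_two_smul_sub_one hσ, add_mulVec, neg_mulVec, one_mulVec,
    ← mulVec_mulVec]
  abel

theorem eventually_mem_switchingRegion (hm : ∀ i, 1 < m i) (hσ : ∀ i, σ i = 0 ∨ σ i = 1)
    (W : Matrix ι ι ℝ) : ∀ᶠ y in 𝓝 σ, W *ᵥ y + vertexInput W σ ∈ switchingRegion m σ :=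
  ((Continuous.matrix_mulVec continuous_const continuous_id).add continuous_const).continuousAt
    |>.preimage_mem_nhds <| isOpen_switchingRegion.mem_nhds <|
      mulVec_add_vertexInput_mem_switchingRegion hm hσ W

end VertexEquilibrium

section Instability

variable {ι : Type*} [Fintype ι] [DecidableEq ι]

def IsTrajectory (τ : ℝ) (W : Matrix ι ι ℝ) (m : ι → ℝ≥0∞) (d : ι → ℝ) (x : ℝ → ι → ℝ) : Prop :=
  ∀ t, 0 ≤ t → HasDerivAt x (τ⁻¹ • (-(x t) + clamp m (W *ᵥ x t + d))) t

theorem exists_norm_lt_dotProduct_ne_zero {u : ι → ℂ} (hu : u ≠ 0) {ε : ℝ} (hε : 0 < ε) :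
    ∃ z : ι → ℝ, ‖z‖ < ε ∧ (u ⬝ᵥ fun i => (z i : ℂ)) ≠ 0 := by
  obtain ⟨j, hj⟩ := Function.ne_iff.1 hu
  refine ⟨Pi.single j (ε / 2), ?_, ?_⟩
  · rw [Pi.norm_single, Real.norm_of_nonneg (by positivity)]
    linarith
  · have hz : (fun i => ((Pi.single j (ε / 2) : ι → ℝ) i : ℂ)) =
        Pi.single j ((ε / 2 : ℝ) : ℂ) := by
      funext i
      rcases eq_or_ne i j with rfl | hi <;> simp [*]
    rw [hz, dotProduct_single]
    exact mul_ne_zero hj (by exact_mod_cast (half_pos hε).ne')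

theorem re_lt_zero_of_asymptoticallyStable {τ : ℝ} (hτ : 0 < τ) {W : Matrix ι ι ℝ}
    {m : ι → ℝ≥0∞} (hm : ∀ i, 1 < m i) {σ : ι → ℝ} (hσ : ∀ i, σ i = 0 ∨ σ i = 1)
    (hstable : ∀ ε > (0 : ℝ), ∃ δ > (0 : ℝ), ∀ x, IsTrajectory τ W m (vertexInput W σ) x →
      ‖x 0 - σ‖ < δ → ∀ t, 0 ≤ t → ‖x t - σ‖ < ε)
    (hattr : ∃ δ₀ > (0 : ℝ), ∀ x, IsTrajectory τ W m (vertexInput W σ) x →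
      ‖x 0 - σ‖ < δ₀ → Tendsto x atTop (𝓝 σ))
    {u : ι → ℂ} (hu0 : u ≠ 0) {μ : ℂ} (hu : u ᵥ* (-1 + diagonal σ * W).map (↑) = μ • u) :
    μ.re < 0 := by
  by_contra! hμ
  obtain ⟨r, hr, hreg⟩ := Metric.eventually_nhds_iff.1 (eventually_mem_switchingRegion hm hσ W)
  obtain ⟨δ, hδ, hstable⟩ := hstable r hr
  obtain ⟨δ₀, hδ₀, hattr⟩ := hattr
  obtain ⟨z, hz, huz⟩ := exists_norm_lt_dotProduct_ne_zero hu0 (lt_min hδ hδ₀)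
  obtain ⟨K, hK⟩ := exists_lipschitzWith_vectorField τ W m (vertexInput W σ)
  obtain ⟨x, hx0, hx⟩ := hK.exists_forall_hasDerivAt (σ + z)
  have hxσ : ‖x 0 - σ‖ < min δ δ₀ := by rwa [hx0, add_sub_cancel_left]
  have hlin : ∀ t, 0 ≤ t → HasDerivAt x ((τ⁻¹ • (-1 + diagonal σ * W)) *ᵥ (x t - σ)) t :=
    fun t ht => by
      have hxt := hstable x hx (hxσ.trans_le (min_le_left _ _)) t ht
      rw [smul_mulVec, ← neg_add_clamp_vertexInput hσ (hreg ((dist_eq_norm _ _).trans_lt hxt))]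
      exact hx t ht
  have heig : u ᵥ* (τ⁻¹ • (-1 + diagonal σ * W)).map (↑) = ((τ⁻¹ : ℝ) * μ : ℂ) • u := by
    rw [map_smul' _ _ _ Complex.ofReal_mul, vecMul_smul, hu, smul_smul]
  have hre : 0 ≤ ((τ⁻¹ : ℝ) * μ : ℂ).re := by
    simpa using mul_nonneg (inv_nonneg.2 hτ.le) hμ
  apply huz
  simpa [hx0] using
    dotProduct_eq_zero_of_tendsto heig hre hlin (hattr x hx (hxσ.trans_le (min_le_right _ _)))

end Instability

theorem stmt14_general {n : ℕ} (τ : ℝ) (hτ : 0 < τ) (W : Matrix (Fin n) (Fin n) ℝ)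
    (m : Fin n → ℝ≥0∞) (hm : ∀ i, 1 < m i)
    (hstab : ∀ d : Fin n → ℝ, ∃ xs : Fin n → ℝ,
      xs = clamp m (W.mulVec xs + d) ∧
      (∀ y : Fin n → ℝ, y = clamp m (W.mulVec y + d) → y = xs) ∧
      (∀ ε > (0 : ℝ), ∃ δ > (0 : ℝ), ∀ x : ℝ → (Fin n → ℝ),
        (∀ t, 0 ≤ t → HasDerivAt x (τ⁻¹ • (-(x t) + clamp m (W.mulVec (x t) + d))) t) →
        ‖x 0 - xs‖ < δ → ∀ t, 0 ≤ t → ‖x t - xs‖ < ε) ∧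
      (∃ δ₀ > (0 : ℝ), ∀ x : ℝ → (Fin n → ℝ),
        (∀ t, 0 ≤ t → HasDerivAt x (τ⁻¹ • (-(x t) + clamp m (W.mulVec (x t) + d))) t) →
        ‖x 0 - xs‖ < δ₀ → Filter.Tendsto x Filter.atTop (nhds xs))) :
    TotallyHurwitz (-1 + W) ∧
    (∀ σ : Fin n → ℝ, (∀ i, σ i = 0 ∨ σ i = 1) →
      let d := ((2 : ℝ) • (1 : Matrix (Fin n) (Fin n) ℝ) - W).mulVec σ - 1
      σ = clamp m (W.mulVec σ + d) ∧
      ∀ i, (σ i = 1 → 0 < (W.mulVec σ + d) i ∧ ENNReal.ofReal ((W.mulVec σ + d) i) < m i) ∧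
           (σ i = 0 → (W.mulVec σ + d) i < 0)) := by
  refine ⟨fun S μ hμ => ?_, fun σ hσ => ⟨eq_clamp_vertexInput hm hσ W,
    mulVec_add_vertexInput_mem_switchingRegion hm hσ W⟩⟩
  set σ : Fin n → ℝ := fun i => if i ∈ S then 1 else 0
  have hσ : ∀ i, σ i = 0 ∨ σ i = 1 := fun i => by by_cases hi : i ∈ S <;> simp [σ, hi]
  obtain ⟨xs, -, huniq, hstable, hattr⟩ := hstab (vertexInput W σ)
  obtain rfl := huniq σ (eq_clamp_vertexInput hm hσ W)
  obtain ⟨u, hu0, hu⟩ :=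
    exists_vecMul_eq_smul_of_hasEigenvalue (hasEigenvalue_map_ofReal_of_submatrix W S hμ)
  exact re_lt_zero_of_asymptoticallyStable hτ hm hσ hstable hattr hu0 hu

theorem stmt14 {n : ℕ} (τ : ℝ) (hτ : 0 < τ) (W : Matrix (Fin n) (Fin n) ℝ)
    (m : Fin n → ℝ≥0∞) (hm : ∀ i, 1 < m i)
    (hinv : ∀ σ : Fin n → ℝ, (∀ i, σ i = 0 ∨ σ i = 1) →
      (1 - Matrix.diagonal σ * W).det ≠ 0)
    (hstab : ∀ d : Fin n → ℝ, ∃ xs : Fin n → ℝ,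
      xs = clamp m (W.mulVec xs + d) ∧
      (∀ y : Fin n → ℝ, y = clamp m (W.mulVec y + d) → y = xs) ∧
      (∀ ε > (0 : ℝ), ∃ δ > (0 : ℝ), ∀ x : ℝ → (Fin n → ℝ),
        (∀ t, 0 ≤ t → HasDerivAt x (τ⁻¹ • (-(x t) + clamp m (W.mulVec (x t) + d))) t) →
        ‖x 0 - xs‖ < δ → ∀ t, 0 ≤ t → ‖x t - xs‖ < ε) ∧
      (∃ δ₀ > (0 : ℝ), ∀ x : ℝ → (Fin n → ℝ),
        (∀ t, 0 ≤ t → HasDerivAt x (τ⁻¹ • (-(x t) + clamp m (W.mulVec (x t) + d))) t) →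
        ‖x 0 - xs‖ < δ₀ → Filter.Tendsto x Filter.atTop (nhds xs))) :
    TotallyHurwitz (-1 + W) ∧
    (∀ σ : Fin n → ℝ, (∀ i, σ i = 0 ∨ σ i = 1) →
      let d := ((2 : ℝ) • (1 : Matrix (Fin n) (Fin n) ℝ) - W).mulVec σ - 1
      σ = clamp m (W.mulVec σ + d) ∧
      ∀ i, (σ i = 1 → 0 < (W.mulVec σ + d) i ∧ ENNReal.ofReal ((W.mulVec σ + d) i) < m i) ∧
           (σ i = 0 → (W.mulVec σ + d) i < 0)) :=
  stmt14_general τ hτ W m hm hstab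
end

section
/- Consider τẋ = −x + [Wx + d(t)]₀^∞ with nonnegative initial condition x(0) = x₀ ≥ 0, and the excitatory-only comparison system τẏ = −y + [[W]₀^∞ y + d(t)]₀^∞ with y(0) = x₀, where [W]₀^∞ is the entrywise positive part of W. Then x(t) ≤ y(t) componentwise for all t ≥ 0. -/
open Matrix
open scoped ENNReal

/-!
Where `x ≥ 0` we have `W x ≤ [W]₀^∞ x`, so `x` is a subsolution of the excitatory system, whose
vector field is quasi-monotone (Kamke–Müller) and Lipschitz. For such a field, at a time where the
largest component of `x - y` is nonnegative, quasi-monotonicity and the Lipschitz bound `K` make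
the derivative of that component at most `K` times itself; Gronwall's inequality applied to the
upper envelope of the components then keeps `x - y ≤ 0`. Nonnegativity of `x` is the same
comparison, of `0` with `x`, for the decay field `u ↦ -u/τ`.
-/

open Set Filter Finset
open scoped Topology NNReal

variable {ι : Type*}

/-- The Kamke–Müller condition. -/
def QuasiMonotone (F : (ι → ℝ) → ι → ℝ) : Prop :=
  ∀ ⦃u w : ι → ℝ⦄ ⦃i : ι⦄, u ≤ w → u i = w i → F u i ≤ F w i

theorem quasiMonotone_const_smul (r : ℝ) : QuasiMonotone ((r • ·) : (ι → ℝ) → ι → ℝ) :=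
  fun _ _ _ _ hi => by simp [hi]

theorem posv_mono : Monotone (posv : (ι → ℝ) → ι → ℝ) :=
  fun _ _ h i => max_le_max_right 0 (h i)

variable [Fintype ι]

theorem sup'_le_gronwallBound_of_deriv_le_at_max [Nonempty ι] {g g' : ι → ℝ → ℝ} {a b K : ℝ}
    (hg : ∀ i, ∀ t ∈ Icc a b, HasDerivAt (g i) (g' i t) t)
    (hmax : ∀ t ∈ Ico a b, ∀ i, (∀ j, g j t ≤ g i t) → g' i t ≤ K * g i t) :
    ∀ t ∈ Icc a b, univ.sup' univ_nonempty (g · t) ≤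
      gronwallBound (univ.sup' univ_nonempty (g · a)) K 0 (t - a) := by
  set F : ℝ → ℝ := fun t => univ.sup' univ_nonempty (g · t)
  have hF : ∀ t i, g i t ≤ F t := fun t i => le_sup' (g · t) (mem_univ i)
  refine le_gronwallBound_of_liminf_deriv_right_le (f' := fun t => K * F t)
    (ContinuousOn.finset_sup'_apply _ fun i _ t ht => (hg i t ht).continuousAt.continuousWithinAt)
    ?_ le_rfl fun t _ => (add_zero _).ge
  intro t ht r hr
  have hlt : ∀ i, ∀ᶠ z in 𝓝[>] t, (z - t)⁻¹ * (g i z - F t) < r := by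
    intro i
    have hgi := hg i t (Ico_subset_Icc_self ht)
    rcases (hF t i).eq_or_lt with htop | hbelow
    · have hslope : Tendsto (slope (g i) t) (𝓝[>] t) (𝓝 (g' i t)) :=
        (hasDerivWithinAt_iff_tendsto_slope' (lt_irrefl t)).1 hgi.hasDerivWithinAt
      have hderiv : g' i t < r := by
        rw [← htop] at hr
        exact (hmax t ht i fun j => htop ▸ hF t j).trans_lt hr
      rw [← htop]
      exact hslope.eventually_lt_const hderiv
    · -- a function strictly below the envelope has difference quotient tending to `-∞`
      have hinv : Tendsto (fun z => (z - t)⁻¹) (𝓝[>] t) atTop :=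
        tendsto_inv_nhdsGT_zero.comp <| tendsto_nhdsWithin_of_tendsto_nhds_of_eventually_within _
          (((continuous_sub_right t).tendsto' t 0 (sub_self t)).mono_left nhdsWithin_le_nhds)
          (eventually_nhdsWithin_of_forall fun _ hz => sub_pos.2 (mem_Ioi.1 hz))
      have hgap : Tendsto (fun z => g i z - F t) (𝓝[>] t) (𝓝 (g i t - F t)) :=
        (hgi.continuousAt.tendsto.sub_const _).mono_left nhdsWithin_le_nhds
      exact (hinv.atTop_mul_neg (sub_neg.2 hbelow) hgap).eventually_lt_atBot r
  refine ((eventually_all.2 hlt).mono fun z hz => ?_).frequently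
  obtain ⟨j, -, hj⟩ := exists_mem_eq_sup' univ_nonempty (g · z)
  simpa only [F, hj] using hz j

theorem nonpos_of_deriv_le_at_max {g g' : ι → ℝ → ℝ} {a b K : ℝ}
    (hg : ∀ i, ∀ t ∈ Icc a b, HasDerivAt (g i) (g' i t) t) (ha : ∀ i, g i a ≤ 0)
    (hmax : ∀ t ∈ Ico a b, ∀ i, 0 ≤ g i t → (∀ j, g j t ≤ g i t) → g' i t ≤ K * g i t) :
    ∀ t ∈ Icc a b, ∀ i, g i t ≤ 0 := by
  intro t ht i
  -- adjoining the zero function makes the envelope `max 0 (max_i g i)`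
  let G : Option ι → ℝ → ℝ := fun o => o.elim 0 g
  let G' : Option ι → ℝ → ℝ := fun o => o.elim 0 g'
  have hG : ∀ o, ∀ t ∈ Icc a b, HasDerivAt (G o) (G' o t) t := by
    rintro (_ | j) s hs
    exacts [hasDerivAt_const s 0, hg j s hs]
  have hGmax : ∀ s ∈ Ico a b, ∀ o, (∀ p, G p s ≤ G o s) → G' o s ≤ K * G o s := by
    rintro s hs (_ | j) hj
    · simp [G, G']
    · exact hmax s hs j (hj none) fun k => hj (some k)
  have hGa : univ.sup' univ_nonempty (G · a) = 0 :=
    le_antisymm (sup'_le _ _ fun o _ => by cases o; exacts [le_rfl, ha _])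
      (le_sup' (G · a) (mem_univ none))
  have hbound := sup'_le_gronwallBound_of_deriv_le_at_max hG hGmax t ht
  rw [hGa, gronwallBound_ε0_δ0] at hbound
  exact (le_sup' (G · t) (mem_univ (some i))).trans hbound

theorem QuasiMonotone.apply_sub_apply_le {F : (ι → ℝ) → ι → ℝ} {K : ℝ≥0} (hF : QuasiMonotone F)
    (hK : LipschitzWith K F) {u v : ι → ℝ} {i : ι} (hi : ∀ j, u j - v j ≤ u i - v i)
    (h0 : 0 ≤ u i - v i) : F u i - F v i ≤ K * (u i - v i) := by
  have : Nonempty ι := ⟨i⟩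
  -- raise `v` uniformly until it dominates `u` and touches it at `i`
  set w : ι → ℝ := v + fun _ => u i - v i
  have huw : u ≤ w := fun j => by simp only [w, Pi.add_apply]; linarith [hi j]
  calc F u i - F v i ≤ F w i - F v i := sub_le_sub_right (hF huw (by simp [w])) _
    _ ≤ ‖F w - F v‖ := (le_abs_self _).trans (norm_le_pi_norm (F w - F v) i)
    _ ≤ K * ‖w - v‖ := hK.norm_sub_le w v
    _ = K * (u i - v i) := by simp [w, abs_of_nonneg h0]

theorem le_of_quasiMonotone_of_lipschitzWith {G : ℝ → (ι → ℝ) → ι → ℝ} {K : ℝ≥0}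
    (hG : ∀ t, QuasiMonotone (G t)) (hGK : ∀ t, LipschitzWith K (G t))
    {x y x' y' : ℝ → ι → ℝ} {a b : ℝ}
    (hx : ∀ t ∈ Icc a b, HasDerivAt x (x' t) t) (hy : ∀ t ∈ Icc a b, HasDerivAt y (y' t) t)
    (hx' : ∀ t ∈ Ico a b, x' t ≤ G t (x t)) (hy' : ∀ t ∈ Ico a b, G t (y t) ≤ y' t)
    (ha : x a ≤ y a) : ∀ t ∈ Icc a b, x t ≤ y t := by
  intro t ht i
  refine sub_nonpos.1 <| nonpos_of_deriv_le_at_max (K := K)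
    (g := fun i t => x t i - y t i) (g' := fun i t => x' t i - y' t i)
    (fun i s hs => (hasDerivAt_pi.1 (hx s hs) i).sub (hasDerivAt_pi.1 (hy s hs) i))
    (fun i => sub_nonpos.2 (ha i)) (fun s hs j h0 hj => ?_) t ht i
  calc x' s j - y' s j ≤ G s (x s) j - G s (y s) j := sub_le_sub (hx' s hs j) (hy' s hs j)
    _ ≤ K * (x s j - y s j) := (hG s).apply_sub_apply_le (hGK s) hj h0

theorem lipschitzWith_posv : LipschitzWith 1 (posv : (ι → ℝ) → ι → ℝ) :=
  LipschitzWith.of_dist_le_mul fun u v => by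
    rw [NNReal.coe_one, one_mul, dist_pi_le_iff dist_nonneg]
    intro i
    calc dist (posv u i) (posv v i) ≤ dist (u i) (v i) := abs_max_sub_max_le_abs _ _ _
      _ ≤ dist u v := dist_le_pi_dist u v i

noncomputable def thresholdLinearField (τ : ℝ) (A : Matrix ι ι ℝ) (c u : ι → ℝ) : ι → ℝ :=
  τ⁻¹ • (-u + posv (A *ᵥ u + c))

theorem lipschitzWith_thresholdLinearField (τ : ℝ) (A : Matrix ι ι ℝ) (c : ι → ℝ) :
    LipschitzWith (‖τ⁻¹‖₊ * (1 + ‖LinearMap.toContinuousLinearMap A.mulVecLin‖₊))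
      (thresholdLinearField τ A c) := by
  have hA : LipschitzWith ‖LinearMap.toContinuousLinearMap A.mulVecLin‖₊ (A *ᵥ ·) :=
    (LinearMap.toContinuousLinearMap A.mulVecLin).lipschitz
  have hAc : LipschitzWith ‖LinearMap.toContinuousLinearMap A.mulVecLin‖₊ (A *ᵥ · + c) := by
    simpa using hA.add (LipschitzWith.const c)
  have hposv := lipschitzWith_posv.comp hAc
  rw [one_mul] at hposv
  exact (lipschitzWith_smul τ⁻¹).comp (LipschitzWith.id.neg.add hposv)

variable {τ : ℝ} {A : Matrix ι ι ℝ} {c u : ι → ℝ}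

theorem quasiMonotone_thresholdLinearField (hτ : 0 ≤ τ) (hA : ∀ i j, 0 ≤ A i j) :
    QuasiMonotone (thresholdLinearField τ A c) := fun u w i huw hi => by
  have hAuw : A *ᵥ u ≤ A *ᵥ w := fun k => dotProduct_le_dotProduct_of_nonneg_left huw (hA k)
  have hpos := posv_mono (add_le_add_left hAuw c) i
  simp only [thresholdLinearField, Pi.smul_apply, Pi.add_apply, Pi.neg_apply, smul_eq_mul, hi]
  gcongr

theorem thresholdLinearField_le_map_max (hτ : 0 ≤ τ) (hu : 0 ≤ u) :
    thresholdLinearField τ A c u ≤ thresholdLinearField τ (A.map (max · 0)) c u := fun i => by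
  have hAu : A *ᵥ u ≤ A.map (max · 0) *ᵥ u := fun k =>
    dotProduct_le_dotProduct_of_nonneg_right (fun j => le_max_left (A k j) 0) hu
  have hpos := posv_mono (add_le_add_left hAu c) i
  simp only [thresholdLinearField, Pi.smul_apply, Pi.add_apply, Pi.neg_apply, smul_eq_mul]
  gcongr

theorem neg_inv_smul_le_thresholdLinearField (hτ : 0 ≤ τ) :
    (-τ⁻¹) • u ≤ thresholdLinearField τ A c u := fun i => by
  have hpos : 0 ≤ posv (A *ᵥ u + c) i := le_max_right _ _
  simp only [thresholdLinearField, Pi.smul_apply, Pi.add_apply, Pi.neg_apply, smul_eq_mul]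
  nlinarith [inv_nonneg.2 hτ]

theorem stmt15 {n : ℕ} (τ : ℝ) (hτ : 0 < τ) (W : Matrix (Fin n) (Fin n) ℝ)
    (d : ℝ → Fin n → ℝ) (x y : ℝ → Fin n → ℝ)
    (hx0 : ∀ i, 0 ≤ x 0 i) (hy0 : y 0 = x 0)
    (hx : ∀ t, 0 ≤ t → HasDerivAt x (τ⁻¹ • (-(x t) + posv (W.mulVec (x t) + d t))) t)
    (hy : ∀ t, 0 ≤ t →
      HasDerivAt y (τ⁻¹ • (-(y t) + posv ((W.map (fun a => max a 0)).mulVec (y t) + d t))) t) :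
    ∀ t, 0 ≤ t → ∀ i, x t i ≤ y t i := by
  intro T hT
  let F : ℝ → (Fin n → ℝ) → Fin n → ℝ := fun t => thresholdLinearField τ W (d t)
  let Fexc : ℝ → (Fin n → ℝ) → Fin n → ℝ :=
    fun t => thresholdLinearField τ (W.map (max · 0)) (d t)
  -- `0` is a subsolution of the linear decay `u' = -u/τ`, and `x` a supersolution
  have hx_nonneg : ∀ t ∈ Icc 0 T, 0 ≤ x t :=
    le_of_quasiMonotone_of_lipschitzWith (G := fun _ => ((-τ⁻¹) • ·)) (x' := 0)
      (y' := fun t => F t (x t)) (fun _ => quasiMonotone_const_smul _)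
      (fun _ => lipschitzWith_smul _) (fun t _ => hasDerivAt_const t 0) (fun t ht => hx t ht.1)
      (fun _ _ => by simp) (fun _ _ => neg_inv_smul_le_thresholdLinearField hτ.le) hx0
  exact le_of_quasiMonotone_of_lipschitzWith (G := Fexc) (x' := fun t => F t (x t))
    (y' := fun t => Fexc t (y t))
    (fun _ => quasiMonotone_thresholdLinearField hτ.le fun _ _ => le_max_right _ _)
    (fun t => lipschitzWith_thresholdLinearField τ _ (d t))
    (fun t ht => hx t ht.1) (fun t ht => hy t ht.1)
    (fun t ht => thresholdLinearField_le_map_max hτ.le (hx_nonneg t (Ico_subset_Icc_self ht)))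
    (fun _ _ => le_rfl) hy0.ge T ⟨hT, le_rfl⟩
end

section
/- Consider τẋ = −x + [Wx + d(t)]₀^∞ with d(t) ≤ d̄ for all t ≥ 0 and some d̄ ∈ ℝⁿ_{>0}. If ρ([W]₀^∞) < 1, where [W]₀^∞ is the entrywise positive part of W, then all trajectories starting from nonnegative initial conditions remain bounded for all t ≥ 0. -/
open Matrix
open scoped ENNReal

/-!
Trajectories never leave the nonnegative orthant, because `τ ẋᵢ ≥ -xᵢ`. On the orthant
the input obeys `[W x + d]₀^∞ ≤ A x + [d̄]₀^∞` with `A = [W]₀^∞`, so the system is dominated by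
the excitatory-only one. Since `ρ(Aᵀ) = ρ(A) < 1`, Gelfand's formula gives a power of `Aᵀ` whose
row sums are `< 1`, and a finite Neumann series of `Aᵀ` produces `w ≥ 1` and `θ < 1` with
`Aᵀ w ≤ θ w`. The linear Lyapunov function `V = w ⬝ᵥ x` then satisfies
`τ V̇ ≤ (θ - 1) V + w ⬝ᵥ [d̄]₀^∞`, so it is bounded by Grönwall's inequality, and it dominates
`‖x‖` on the orthant.
-/

open Filter
open scoped NNReal

section SpectralRadius

variable {ι : Type*} [Fintype ι] [DecidableEq ι]

lemma Matrix.spectrum_transpose {K : Type*} [Field K] (M : Matrix ι ι K) :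
    spectrum K Mᵀ = spectrum K M := by
  ext μ
  rw [Matrix.mem_spectrum_iff_isRoot_charpoly, Matrix.mem_spectrum_iff_isRoot_charpoly,
    Matrix.charpoly_transpose]

lemma specRad_eq_sSup_norm_spectrum (A : Matrix ι ι ℝ) :
    specRad A = sSup (norm '' spectrum ℂ (A.map fun a : ℝ => (a : ℂ))) := by
  simp only [specRad, Module.End.hasEigenvalue_iff_mem_spectrum, Matrix.spectrum_toLin']
  congr 1
  ext r
  simp [eq_comm]

lemma specRad_transpose (A : Matrix ι ι ℝ) : specRad Aᵀ = specRad A := by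
  rw [specRad_eq_sSup_norm_spectrum, specRad_eq_sSup_norm_spectrum, Matrix.transpose_map,
    Matrix.spectrum_transpose]

lemma spectralRadius_map_lt_one_of_specRad_lt_one {A : Matrix ι ι ℝ} (h : specRad A < 1) :
    spectralRadius ℂ (A.map fun a : ℝ => (a : ℂ)) < 1 := by
  have hfin := Matrix.finite_spectrum (A.map fun a : ℝ => (a : ℂ))
  have hlt : ∀ μ ∈ spectrum ℂ (A.map fun a : ℝ => (a : ℂ)), ‖μ‖ < 1 := fun μ hμ =>
    ((le_csSup (hfin.image _).bddAbove ⟨μ, hμ, rfl⟩).trans_eq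
      (specRad_eq_sSup_norm_spectrum A).symm).trans_lt h
  rw [spectralRadius, ← hfin.coe_toFinset]
  simp only [Finset.mem_coe]
  rw [← Finset.sup_eq_iSup, Finset.sup_lt_iff (by simp)]
  exact fun μ hμ => mod_cast hlt μ (hfin.mem_toFinset.1 hμ)

end SpectralRadius

lemma exists_pow_norm_lt_one_of_spectralRadius_lt_one {A : Type*} [NormedRing A]
    [NormedAlgebra ℂ A] [CompleteSpace A] {a : A} (h : spectralRadius ℂ a < 1) :
    ∃ k, 1 ≤ k ∧ ‖a ^ k‖ < 1 := by
  obtain ⟨k, hk, hk1⟩ := ((spectrum.pow_nnnorm_pow_one_div_tendsto_nhds_spectralRadius a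
    |>.eventually_lt_const h).and (eventually_ge_atTop 1)).exists
  refine ⟨k, hk1, ?_⟩
  rw [one_div, ENNReal.rpow_inv_lt_iff (by positivity), ENNReal.one_rpow] at hk
  exact_mod_cast hk

attribute [local instance] Matrix.linftyOpNormedAddCommGroup in
lemma Matrix.sum_apply_le_linfty_opNorm_map_ofReal {ι : Type*} [Fintype ι] (A : Matrix ι ι ℝ)
    (i : ι) : ∑ j, A i j ≤ ‖A.map fun a : ℝ => (a : ℂ)‖ :=
  calc ∑ j, A i j ≤ ((∑ j, ‖(A.map fun a : ℝ => (a : ℂ)) i j‖₊ : ℝ≥0) : ℝ) := by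
        push_cast
        exact Finset.sum_le_sum fun j _ => by simpa using le_abs_self (A i j)
    _ ≤ ‖A.map fun a : ℝ => (a : ℂ)‖ := by
        rw [Matrix.linfty_opNorm_def, NNReal.coe_le_coe]
        exact Finset.le_sup (f := fun i => ∑ j, ‖(A.map fun a : ℝ => (a : ℂ)) i j‖₊)
          (Finset.mem_univ i)

section NonnegMatrix

variable {ι : Type*} [Fintype ι] {A : Matrix ι ι ℝ}

lemma Matrix.mulVec_nonneg_of_nonneg (hA : ∀ i j, 0 ≤ A i j) {v : ι → ℝ} (hv : 0 ≤ v) :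
    0 ≤ A *ᵥ v :=
  fun i => Finset.sum_nonneg fun j _ => mul_nonneg (hA i j) (hv j)

lemma Matrix.pow_mulVec_one_nonneg [DecidableEq ι] (hA : ∀ i j, 0 ≤ A i j) (k : ℕ) :
    0 ≤ A ^ k *ᵥ 1 := by
  induction k with
  | zero => simp
  | succ k ih =>
    rw [pow_succ', ← Matrix.mulVec_mulVec]
    exact Matrix.mulVec_nonneg_of_nonneg hA ih

/-- The witness is the Neumann sum `v = ∑_{j<k} Aʲ 1`, for which `A v = v - 1 + Aᵏ 1`. -/
lemma Matrix.exists_one_le_mulVec_le_of_sum_pow_le [DecidableEq ι] (hA : ∀ i j, 0 ≤ A i j)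
    {k : ℕ} (hk : 1 ≤ k) {c : ℝ} (hc : c < 1) (hrow : ∀ i, ∑ j, (A ^ k) i j ≤ c) :
    ∃ v : ι → ℝ, ∃ θ : ℝ, θ < 1 ∧ 1 ≤ v ∧ A *ᵥ v ≤ θ • v := by
  rcases isEmpty_or_nonempty ι with hι | hι
  · exact ⟨0, 0, zero_lt_one, isEmptyElim, isEmptyElim⟩
  set v : ι → ℝ := ∑ j ∈ Finset.range k, A ^ j *ᵥ 1 with hv
  have hv1 : 1 ≤ v := fun i => by
    have := Finset.single_le_sum (f := fun j => (A ^ j *ᵥ 1) i)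
      (fun j _ => Matrix.pow_mulVec_one_nonneg hA j i) (Finset.mem_range.2 hk)
    simpa [hv, Finset.sum_apply] using this
  have hAv : A *ᵥ v = v - 1 + A ^ k *ᵥ 1 := by
    have h1 := Finset.sum_range_succ' (fun j => A ^ j *ᵥ (1 : ι → ℝ)) k
    have h2 := Finset.sum_range_succ (fun j => A ^ j *ᵥ (1 : ι → ℝ)) k
    simp only [pow_zero, Matrix.one_mulVec] at h1
    rw [hv, Matrix.mulVec_sum]
    simp only [Matrix.mulVec_mulVec, ← pow_succ']
    rw [← hv] at h2
    rw [eq_sub_of_add_eq (h1.symm.trans h2)]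
    abel
  obtain ⟨i₀, hi₀⟩ := Finite.exists_max v
  have hV : 0 < v i₀ := zero_lt_one.trans_le (hv1 i₀)
  refine ⟨v, 1 - (1 - c) / v i₀, by linarith [div_pos (sub_pos.2 hc) hV], hv1, fun i => ?_⟩
  have hAvi : (A *ᵥ v) i ≤ v i - (1 - c) := by
    have := hrow i
    rw [hAv]
    simp only [Pi.add_apply, Pi.sub_apply, Pi.one_apply, Matrix.mulVec, dotProduct, mul_one]
    linarith
  have hgap : (1 - c) / v i₀ * v i ≤ 1 - c := by
    rw [div_mul_eq_mul_div, div_le_iff₀ hV]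
    exact mul_le_mul_of_nonneg_left (hi₀ i) (sub_nonneg.2 hc.le)
  rw [Pi.smul_apply, smul_eq_mul]
  linarith

attribute [local instance] Matrix.linftyOpNormedRing Matrix.linftyOpNormedAlgebra in
theorem Matrix.exists_one_le_mulVec_le_of_specRad_lt_one [DecidableEq ι]
    (hA : ∀ i j, 0 ≤ A i j) (h : specRad A < 1) :
    ∃ v : ι → ℝ, ∃ θ : ℝ, θ < 1 ∧ 1 ≤ v ∧ A *ᵥ v ≤ θ • v := by
  obtain ⟨k, hk, hnorm⟩ := exists_pow_norm_lt_one_of_spectralRadius_lt_one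
    (a := A.map fun a : ℝ => (a : ℂ)) (spectralRadius_map_lt_one_of_specRad_lt_one h)
  refine Matrix.exists_one_le_mulVec_le_of_sum_pow_le hA hk hnorm fun i => ?_
  calc ∑ j, (A ^ k) i j ≤ ‖(A ^ k).map fun a : ℝ => (a : ℂ)‖ :=
        Matrix.sum_apply_le_linfty_opNorm_map_ofReal (A ^ k) i
    _ = ‖(A.map fun a : ℝ => (a : ℂ)) ^ k‖ :=
        congrArg norm (Matrix.map_pow A Complex.ofRealHom k)

end NonnegMatrix

lemma gronwallBound_le_max_of_neg {K : ℝ} (hK : K < 0) (δ ε : ℝ) {t : ℝ} (ht : 0 ≤ t) :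
    gronwallBound δ K ε t ≤ max δ (-ε / K) := by
  rw [gronwallBound_of_K_ne_0 hK.ne]
  have he : Real.exp (K * t) ≤ 1 :=
    Real.exp_le_one_iff.2 (mul_nonpos_of_nonpos_of_nonneg hK.le ht)
  have he' : 0 ≤ 1 - Real.exp (K * t) := sub_nonneg.2 he
  calc δ * Real.exp (K * t) + ε / K * (Real.exp (K * t) - 1)
      = Real.exp (K * t) * δ + (1 - Real.exp (K * t)) * (-ε / K) := by ring
    _ ≤ Real.exp (K * t) * max δ (-ε / K) + (1 - Real.exp (K * t)) * max δ (-ε / K) := by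
      gcongr
      · exact le_max_left _ _
      · exact le_max_right _ _
    _ = max δ (-ε / K) := by ring

lemma le_max_of_hasDerivAt_le_mul_add {g g' : ℝ → ℝ} {K ε : ℝ} (hK : K < 0)
    (hg : ∀ t, 0 ≤ t → HasDerivAt g (g' t) t) (hle : ∀ t, 0 ≤ t → g' t ≤ K * g t + ε)
    {t : ℝ} (ht : 0 ≤ t) : g t ≤ max (g 0) (-ε / K) := by
  have := le_gronwallBound_of_liminf_deriv_right_le (f' := g') (a := 0) (b := t)
    (fun s hs => (hg s hs.1).continuousAt.continuousWithinAt)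
    (fun s hs _ hr => (hg s hs.1).hasDerivWithinAt.liminf_right_slope_le hr)
    le_rfl (fun s hs => hle s hs.1) t ⟨ht, le_rfl⟩
  rw [sub_zero] at this
  exact this.trans (gronwallBound_le_max_of_neg hK _ _ ht)

section Network

lemma posv_nonneg_s16 {ι : Type*} (y : ι → ℝ) : 0 ≤ posv y := fun _ => le_max_right _ _

lemma nonneg_of_hasDerivAt_inv_smul_neg_add {ι : Type*} {τ : ℝ} (hτ : 0 < τ)
    {x u : ℝ → ι → ℝ} (hx0 : 0 ≤ x 0) (hx : ∀ t, 0 ≤ t → HasDerivAt x (τ⁻¹ • (-(x t) + u t)) t)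
    (hu : ∀ t, 0 ≤ t → 0 ≤ u t) {t : ℝ} (ht : 0 ≤ t) : 0 ≤ x t := by
  intro i
  have hτ' : 0 < τ⁻¹ := inv_pos.2 hτ
  have hbound := le_max_of_hasDerivAt_le_mul_add (g := fun s => -x s i) (ε := 0)
    (neg_neg_of_pos hτ') (fun s hs => (hasDerivAt_pi.1 (hx s hs) i).neg) (fun s hs => ?_) ht
  · have hmax : max (-x 0 i) (-0 / -τ⁻¹) ≤ 0 := max_le (neg_nonpos.2 (hx0 i)) (by simp)
    exact neg_nonpos.1 (hbound.trans hmax)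
  · have := mul_nonneg hτ'.le (hu s hs i)
    simp only [Pi.smul_apply, Pi.add_apply, Pi.neg_apply, smul_eq_mul]
    linarith

variable {ι : Type*} [Fintype ι]

lemma HasDerivAt.const_dotProduct {x : ℝ → ι → ℝ} {x' : ι → ℝ} {t : ℝ}
    (h : HasDerivAt x x' t) (w : ι → ℝ) : HasDerivAt (fun s => w ⬝ᵥ x s) (w ⬝ᵥ x') t :=
  HasDerivAt.fun_sum fun i _ => (hasDerivAt_pi.1 h i).const_mul (w i)

lemma posv_mulVec_add_le {W A : Matrix ι ι ℝ} (hWA : ∀ i j, W i j ≤ A i j)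
    (hA : ∀ i j, 0 ≤ A i j) {x d dbar : ι → ℝ} (hx : 0 ≤ x) (hd : d ≤ dbar) :
    posv (W *ᵥ x + d) ≤ A *ᵥ x + posv dbar := by
  intro i
  have hWx : (W *ᵥ x) i ≤ (A *ᵥ x) i :=
    Finset.sum_le_sum fun j _ => mul_le_mul_of_nonneg_right (hWA i j) (hx j)
  have hAx : 0 ≤ (A *ᵥ x) i := Matrix.mulVec_nonneg_of_nonneg hA hx i
  have hdi : d i ≤ max (dbar i) 0 := (hd i).trans (le_max_left _ _)
  simp only [posv, Pi.add_apply]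
  exact max_le (by linarith) (by positivity)

lemma dotProduct_posv_mulVec_add_le {W A : Matrix ι ι ℝ} (hWA : ∀ i j, W i j ≤ A i j)
    (hA : ∀ i j, 0 ≤ A i j) {w x d dbar : ι → ℝ} {θ : ℝ} (hw : 0 ≤ w) (hAw : Aᵀ *ᵥ w ≤ θ • w)
    (hx : 0 ≤ x) (hd : d ≤ dbar) :
    w ⬝ᵥ posv (W *ᵥ x + d) ≤ θ * (w ⬝ᵥ x) + w ⬝ᵥ posv dbar :=
  calc w ⬝ᵥ posv (W *ᵥ x + d) ≤ w ⬝ᵥ (A *ᵥ x + posv dbar) :=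
        dotProduct_le_dotProduct_of_nonneg_left (posv_mulVec_add_le hWA hA hx hd) hw
    _ = (Aᵀ *ᵥ w) ⬝ᵥ x + w ⬝ᵥ posv dbar := by
        rw [dotProduct_add, dotProduct_mulVec, mulVec_transpose]
    _ ≤ (θ • w) ⬝ᵥ x + w ⬝ᵥ posv dbar := by
        gcongr
        exact dotProduct_le_dotProduct_of_nonneg_right hAw hx
    _ = θ * (w ⬝ᵥ x) + w ⬝ᵥ posv dbar := by rw [smul_dotProduct, smul_eq_mul]

lemma norm_le_dotProduct_of_nonneg {w x : ι → ℝ} (hw : 1 ≤ w) (hx : 0 ≤ x) :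
    ‖x‖ ≤ w ⬝ᵥ x := by
  have hwx : ∀ i, 0 ≤ w i * x i := fun i => mul_nonneg (zero_le_one.trans (hw i)) (hx i)
  refine (pi_norm_le_iff_of_nonneg (Finset.sum_nonneg fun i _ => hwx i)).2 fun i => ?_
  rw [Real.norm_of_nonneg (hx i)]
  calc x i ≤ w i * x i := le_mul_of_one_le_left (hx i) (hw i)
    _ ≤ w ⬝ᵥ x := Finset.single_le_sum (fun j _ => hwx j) (Finset.mem_univ i)

end Network

theorem stmt16_general {n : ℕ} (τ : ℝ) (hτ : 0 < τ) (W : Matrix (Fin n) (Fin n) ℝ)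
    (dbar : Fin n → ℝ)
    (d : ℝ → Fin n → ℝ) (hd : ∀ t, 0 ≤ t → ∀ i, d t i ≤ dbar i)
    (hρ : specRad (W.map (fun a => max a 0)) < 1)
    (x : ℝ → Fin n → ℝ) (hx0 : ∀ i, 0 ≤ x 0 i)
    (hx : ∀ t, 0 ≤ t → HasDerivAt x (τ⁻¹ • (-(x t) + posv (W.mulVec (x t) + d t))) t) :
    ∃ C : ℝ, ∀ t, 0 ≤ t → ‖x t‖ ≤ C := by
  set A := W.map fun a => max a 0
  have hA : ∀ i j, 0 ≤ A i j := fun i j => le_max_right _ _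
  obtain ⟨w, θ, hθ, hw, hAw⟩ := Matrix.exists_one_le_mulVec_le_of_specRad_lt_one (A := Aᵀ)
    (fun i j => hA j i) ((specRad_transpose A).trans_lt hρ)
  have hxnn : ∀ t, 0 ≤ t → 0 ≤ x t := fun t ht =>
    nonneg_of_hasDerivAt_inv_smul_neg_add hτ hx0 hx (fun s _ => posv_nonneg_s16 _) ht
  have hK : τ⁻¹ * (θ - 1) < 0 := mul_neg_of_pos_of_neg (inv_pos.2 hτ) (sub_neg.2 hθ)
  refine ⟨_, fun t ht => (norm_le_dotProduct_of_nonneg hw (hxnn t ht)).trans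
    (le_max_of_hasDerivAt_le_mul_add (ε := τ⁻¹ * (w ⬝ᵥ posv dbar)) hK
      (fun s hs => (hx s hs).const_dotProduct w) (fun s hs => ?_) ht)⟩
  have hV := dotProduct_posv_mulVec_add_le (fun i j => le_max_left (W i j) 0) hA
    (zero_le_one.trans hw) hAw (hxnn s hs) (hd s hs)
  have := mul_le_mul_of_nonneg_left hV (inv_pos.2 hτ).le
  simp only [dotProduct_smul, dotProduct_add, dotProduct_neg, smul_eq_mul]
  linarith

theorem stmt16 {n : ℕ} (τ : ℝ) (hτ : 0 < τ) (W : Matrix (Fin n) (Fin n) ℝ)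
    (dbar : Fin n → ℝ) (hdbar : ∀ i, 0 < dbar i)
    (d : ℝ → Fin n → ℝ) (hd : ∀ t, 0 ≤ t → ∀ i, d t i ≤ dbar i)
    (hρ : specRad (W.map (fun a => max a 0)) < 1)
    (x : ℝ → Fin n → ℝ) (hx0 : ∀ i, 0 ≤ x 0 i)
    (hx : ∀ t, 0 ≤ t → HasDerivAt x (τ⁻¹ • (-(x t) + posv (W.mulVec (x t) + d t))) t) :
    ∃ C : ℝ, ∀ t, 0 ≤ t → ‖x t‖ ≤ C :=
  stmt16_general τ hτ W dbar d hd hρ x hx0 hx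
end
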